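/- arXiv:2202.13736 — 8 statements merged into one kernel-verified Lean document; each statement's English description precedes it below -/
import Mathlib

section
/- Let A, B ≥ 0 be reals and let X be a real-valued random variable with finite fourth moment satisfying E[X] = 0, E[X²] = A, E[X³] = 0, and E[X⁴] ≤ B. Then for every real C ≥ 0 such that 6AC² + B + C⁴ > 0 and D := ((A + C²)³ / (6AC² + B + C⁴))^{1/2} − C ≥ 0, one has P[X ≤ −C] ≥ D^{4/3} / (16·(6AC² + B + C⁴))^{1/3}. -/
open MeasureTheory ProbabilityTheory
open scoped ENNReal BigOperators


-- rpow root identities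
lemma rt_sq {x : ℝ} (hx : 0 ≤ x) : (x ^ ((1:ℝ)/2)) ^ 2 = x := by
  rw [← Real.rpow_natCast (x ^ ((1:ℝ)/2)) 2, ← Real.rpow_mul hx]
  norm_num

lemma rt_cube {x : ℝ} (hx : 0 ≤ x) : (x ^ ((1:ℝ)/3)) ^ 3 = x := by
  rw [← Real.rpow_natCast (x ^ ((1:ℝ)/3)) 3, ← Real.rpow_mul hx]
  norm_num

lemma rt_four_thirds {x : ℝ} (hx : 0 ≤ x) : (x ^ ((4:ℝ)/3)) ^ 3 = x ^ 4 := by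
  rw [← Real.rpow_natCast (x ^ ((4:ℝ)/3)) 3, ← Real.rpow_mul hx,
    show ((4:ℝ)/3)*((3:ℕ):ℝ) = ((4:ℕ):ℝ) by norm_num, Real.rpow_natCast]

lemma rt_quart {x : ℝ} (hx : 0 ≤ x) : (x ^ ((1:ℝ)/4)) ^ 4 = x := by
  rw [← Real.rpow_natCast (x ^ ((1:ℝ)/4)) 4, ← Real.rpow_mul hx]
  norm_num

lemma aux_cube {m a q : ℝ} (ha : 0 ≤ a) (hq : 0 ≤ q)
    (h : ∀ t : ℝ, 0 < t → 3*t^2*m ≤ 2*t^3*a + q) : m^3 ≤ a^2*q := by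
  rcases le_or_gt m 0 with hm | hm
  · calc m^3 ≤ 0 := Odd.pow_nonpos (by decide) hm
    _ ≤ a^2*q := by positivity
  rcases eq_or_lt_of_le ha with ha0 | ha0
  · -- a = 0 : contradiction
    exfalso
    have ht : (0:ℝ) < Real.sqrt (q/m + 1) := by
      apply Real.sqrt_pos.2; positivity
    have h2 := h _ ht
    rw [← ha0] at h2
    have h3 : Real.sqrt (q/m+1) ^ 2 = q/m + 1 := Real.sq_sqrt (by positivity)
    rw [h3] at h2
    have : 3 * (q/m+1) * m = 3*q + 3*m := by field_simp
    nlinarith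
  rcases eq_or_lt_of_le hq with hq0 | hq0
  · exfalso
    have ht : (0:ℝ) < 3*m/(4*a) := by positivity
    have h2 := h _ ht
    rw [← hq0] at h2
    have ha' : a ≠ 0 := ne_of_gt ha0
    have : 2*(3*m/(4*a))^3*a = (3*m/(4*a))^2 * (3*m/2) := by field_simp; ring
    nlinarith [pow_pos ht 2]
  · set t := (q/a) ^ ((1:ℝ)/3) with htdef
    have ht : 0 < t := Real.rpow_pos_of_pos (by positivity) _
    have ht3 : t^3 = q/a := rt_cube (by positivity)
    have ht3' : t^3 * a = q := by rw [ht3]; field_simp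
    have h2 := h t ht
    have hmta : m ≤ t * a := by nlinarith [sq_nonneg t, mul_pos (mul_pos ht ht) ht]
    calc m^3 ≤ (t*a)^3 := pow_le_pow_left₀ hm.le hmta 3
    _ = a^2*q := by rw [mul_pow, ht3]; field_simp

lemma aux_quartic {w p q : ℝ} (hw : 0 ≤ w) (hp : 0 ≤ p) (hq : 0 ≤ q)
    (h : ∀ t : ℝ, 0 < t → 4*t^3*w ≤ 3*t^4*p + q) : w^4 ≤ p^3*q := by
  rcases eq_or_lt_of_le hw with hw0 | hw0
  · rw [← hw0]; norm_num; positivity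
  rcases eq_or_lt_of_le hp with hp0 | hp0
  · exfalso
    set t := (q/w + 1) ^ ((1:ℝ)/3) with htdef
    have ht : 0 < t := Real.rpow_pos_of_pos (by positivity) _
    have ht3 : t^3 = q/w + 1 := rt_cube (by positivity)
    have h2 := h t ht
    rw [← hp0, ht3] at h2
    have : 4 * (q/w+1) * w = 4*q + 4*w := by field_simp
    nlinarith
  rcases eq_or_lt_of_le hq with hq0 | hq0
  · exfalso
    have ht : (0:ℝ) < w/p := by positivity
    have h2 := h _ ht
    rw [← hq0] at h2
    have hp' : p ≠ 0 := ne_of_gt hp0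
    have e1 : 3*(w/p)^4*p = (w/p)^3 * (3*w) := by field_simp
    nlinarith [pow_pos ht 3]
  · set t := (q/p) ^ ((1:ℝ)/4) with htdef
    have ht : 0 < t := Real.rpow_pos_of_pos (by positivity) _
    have ht4 : t^4 = q/p := rt_quart (by positivity)
    have ht4' : t^4 * p = q := by rw [ht4]; field_simp
    have h2 := h t ht
    have hwtp : w ≤ t * p := by nlinarith [pow_pos ht 3, pow_pos ht 4]
    calc w^4 ≤ (t*p)^4 := pow_le_pow_left₀ hw hwtp 4
    _ = p^3*q := by rw [mul_pow, ht4]; field_simp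

-- pointwise AM-GM lemmas
lemma pt_cube (y t : ℝ) (ht : 0 < t) : 3*t^2*y^2 ≤ 2*t^3*|y| + y^4 := by
  have h1 : y^2 = |y|^2 := (sq_abs y).symm
  have h2 : y^4 = |y|^4 := by rw [← abs_pow]; rw [abs_of_nonneg (by positivity)]
  rw [h1, h2]
  nlinarith [mul_nonneg (mul_nonneg (abs_nonneg y) (sq_nonneg (|y| - t))) (by positivity : (0:ℝ) ≤ |y| + 2*t)]

lemma pt_quart (u t : ℝ) (hu : 0 ≤ u) (ht : 0 < t) : 4*t^3*u ≤ 3*t^4 + u^4 := by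
  nlinarith [mul_nonneg (sq_nonneg (u - t)) (by nlinarith [sq_nonneg (u+t)] : (0:ℝ) ≤ u^2 + 2*t*u + 3*t^2)]



lemma assemble (A C M p q4 qW aa ww : ℝ) (hACnn : 0 ≤ (A + C^2)^3) (hpos : 0 < M)
    (hp0 : 0 ≤ p) (jY4 : q4 ≤ M) (qWleM : qW ≤ M) (q4nn : 0 ≤ q4)
    (hann : 0 ≤ aa) (hwnn : 0 ≤ ww)
    (stepA : (A + C^2)^3 ≤ aa^2 * q4) (stepB : ww^4 ≤ p^3 * qW)
    (jabs : aa = C + 2*ww)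
    (hD : 0 ≤ ((A + C^2)^3 / M) ^ ((1:ℝ)/2) - C) :
    (((A + C^2)^3 / M) ^ ((1:ℝ)/2) - C) ^ ((4:ℝ)/3) / (16*M) ^ ((1:ℝ)/3) ≤ p := by
  have hS2 : (((A + C^2)^3 / M) ^ ((1:ℝ)/2)) ^ 2 = (A + C^2)^3 / M :=
    rt_sq (div_nonneg hACnn hpos.le)
  set S : ℝ := ((A + C^2)^3 / M) ^ ((1:ℝ)/2) with hSdef
  have hSnn : 0 ≤ S := Real.rpow_nonneg (div_nonneg hACnn hpos.le) _
  have hSa : S ≤ aa := by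
    have h1 : (A + C^2)^3 ≤ aa^2 * M := by nlinarith [sq_nonneg aa]
    have h2 : S^2 ≤ aa^2 := by rw [hS2, div_le_iff₀ hpos]; linarith
    exact (pow_le_pow_iff_left₀ hSnn hann (by norm_num)).1 h2
  have hwD : (S - C) / 2 ≤ ww := by linarith
  have hDw : ((S - C)/2) ^ 4 ≤ ww ^ 4 := pow_le_pow_left₀ (by linarith) hwD 4
  have hp3 : (S - C) ^ 4 / (16 * M) ≤ p ^ 3 := by
    have h1 : ww ^ 4 ≤ p ^ 3 * M := by nlinarith [pow_nonneg hp0 3]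
    rw [div_le_iff₀ (by linarith : (0:ℝ) < 16 * M)]
    nlinarith [hDw, h1]
  have hR3 : ((S - C) ^ ((4:ℝ)/3) / (16*M) ^ ((1:ℝ)/3)) ^ 3 = (S - C) ^ 4 / (16 * M) := by
    rw [div_pow, rt_four_thirds hD, rt_cube (by linarith)]
  have hRnn : 0 ≤ (S - C) ^ ((4:ℝ)/3) / (16*M) ^ ((1:ℝ)/3) :=
    div_nonneg (Real.rpow_nonneg hD _) (Real.rpow_nonneg (by linarith) _)
  have hRp : ((S - C) ^ ((4:ℝ)/3) / (16*M) ^ ((1:ℝ)/3)) ^ 3 ≤ p ^ 3 := by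
    rw [hR3]; exact hp3
  exact (pow_le_pow_iff_left₀ hRnn hp0 (by norm_num)).1 hRp

/-- Technical anti-concentration lemma (Lemma `lemma:main-tech`):
if `E[X] = 0`, `E[X²] = A`, `E[X³] = 0`, `E[X⁴] ≤ B`, then for `C ≥ 0`
(with the stated nondegeneracy conditions),
`P[X ≤ -C] ≥ D^{4/3} / (16·(6AC² + B + C⁴))^{1/3}` where
`D = ((A + C²)³/(6AC² + B + C⁴))^{1/2} - C`. -/
theorem technical_anticoncentration
    {Ω : Type*} [MeasurableSpace Ω] (μ : Measure Ω) [IsProbabilityMeasure μ]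
    (X : Ω → ℝ) (A B : ℝ) (hA : 0 ≤ A) (hB : 0 ≤ B)
    (hX1 : Integrable X μ)
    (hX2 : Integrable (fun ω => X ω ^ 2) μ)
    (hX3 : Integrable (fun ω => X ω ^ 3) μ)
    (hX4 : Integrable (fun ω => X ω ^ 4) μ)
    (hm1 : ∫ ω, X ω ∂μ = 0)
    (hm2 : ∫ ω, X ω ^ 2 ∂μ = A)
    (hm3 : ∫ ω, X ω ^ 3 ∂μ = 0)
    (hm4 : ∫ ω, X ω ^ 4 ∂μ ≤ B)
    (C : ℝ) (hC : 0 ≤ C)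
    (hpos : 0 < 6 * A * C ^ 2 + B + C ^ 4)
    (hD : 0 ≤ ((A + C ^ 2) ^ 3 / (6 * A * C ^ 2 + B + C ^ 4)) ^ ((1 : ℝ) / 2) - C) :
    ENNReal.ofReal
        ((((A + C ^ 2) ^ 3 / (6 * A * C ^ 2 + B + C ^ 4)) ^ ((1 : ℝ) / 2) - C) ^ ((4 : ℝ) / 3)
          / (16 * (6 * A * C ^ 2 + B + C ^ 4)) ^ ((1 : ℝ) / 3))
      ≤ μ {ω | X ω ≤ -C} := by
  obtain ⟨X', hSM, heq⟩ := hX1.aestronglyMeasurable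
  have hmeas : Measurable X' := hSM.measurable
  have heq2 : (fun ω => X ω ^ 2) =ᵐ[μ] fun ω => X' ω ^ 2 := by
    filter_upwards [heq] with ω h; rw [h]
  have heq3 : (fun ω => X ω ^ 3) =ᵐ[μ] fun ω => X' ω ^ 3 := by
    filter_upwards [heq] with ω h; rw [h]
  have heq4 : (fun ω => X ω ^ 4) =ᵐ[μ] fun ω => X' ω ^ 4 := by
    filter_upwards [heq] with ω h; rw [h]
  have hX1' : Integrable X' μ := hX1.congr heq
  have hX2' : Integrable (fun ω => X' ω ^ 2) μ := hX2.congr heq2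
  have hX3' : Integrable (fun ω => X' ω ^ 3) μ := hX3.congr heq3
  have hX4' : Integrable (fun ω => X' ω ^ 4) μ := hX4.congr heq4
  have hm1' : ∫ ω, X' ω ∂μ = 0 := by rw [← integral_congr_ae heq, hm1]
  have hm2' : ∫ ω, X' ω ^ 2 ∂μ = A := by rw [← integral_congr_ae heq2, hm2]
  have hm3' : ∫ ω, X' ω ^ 3 ∂μ = 0 := by rw [← integral_congr_ae heq3, hm3]
  have hm4' : ∫ ω, X' ω ^ 4 ∂μ ≤ B := by rw [← integral_congr_ae heq4]; exact hm4
  -- polynomial integrability / values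
  have key : ∀ c0 c1 c2 c3 c4 : ℝ, Integrable
      (fun ω => c4 * X' ω ^ 4 + c3 * X' ω ^ 3 + c2 * X' ω ^ 2 + c1 * X' ω + c0) μ := by
    intro c0 c1 c2 c3 c4
    exact ((((hX4'.const_mul c4).add (hX3'.const_mul c3)).add (hX2'.const_mul c2)).add
      (hX1'.const_mul c1)).add (integrable_const c0)
  have jpoly : ∀ c0 c1 c2 c3 c4 : ℝ,
      ∫ ω, (c4 * X' ω ^ 4 + c3 * X' ω ^ 3 + c2 * X' ω ^ 2 + c1 * X' ω + c0) ∂μ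
        = c4 * (∫ ω, X' ω ^ 4 ∂μ) + c2 * A + c0 := by
    intro c0 c1 c2 c3 c4
    have i43 : Integrable (fun ω => c4 * X' ω ^ 4 + c3 * X' ω ^ 3) μ :=
      (hX4'.const_mul c4).add (hX3'.const_mul c3)
    have i432 : Integrable (fun ω => c4 * X' ω ^ 4 + c3 * X' ω ^ 3 + c2 * X' ω ^ 2) μ :=
      i43.add (hX2'.const_mul c2)
    have i4321 : Integrable
        (fun ω => c4 * X' ω ^ 4 + c3 * X' ω ^ 3 + c2 * X' ω ^ 2 + c1 * X' ω) μ :=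
      i432.add (hX1'.const_mul c1)
    rw [integral_add i4321 (integrable_const c0), integral_add i432 (hX1'.const_mul c1),
      integral_add i43 (hX2'.const_mul c2),
      integral_add (hX4'.const_mul c4) (hX3'.const_mul c3),
      integral_const_mul, integral_const_mul, integral_const_mul, integral_const_mul,
      hm1', hm2', hm3', integral_const]
    simp
  -- the event
  set E : Set Ω := {ω | X' ω ≤ -C} with hEdef
  have hE : MeasurableSet E := measurableSet_le hmeas measurable_const
  have hsetEq : μ {ω | X ω ≤ -C} = μ E := by
    apply measure_congr
    filter_upwards [heq] with ω h
    simp only [eq_iff_iff]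
    show (X ω ≤ -C) ↔ (X' ω ≤ -C)
    rw [h]
  rw [hsetEq]
  set p : ℝ := (μ E).toReal with hpdef
  have hp0 : 0 ≤ p := ENNReal.toReal_nonneg
  refine le_trans (ENNReal.ofReal_le_ofReal ?_) (ENNReal.ofReal_toReal (measure_ne_top μ E)).le
  -- Y = X' + C and W = Y⁻
  set Y : Ω → ℝ := fun ω => X' ω + C with hYdef
  set W : Ω → ℝ := fun ω => max (-(Y ω)) 0 with hWdef
  have eY2 : (fun ω => Y ω ^ 2)
      = fun ω => 0 * X' ω ^ 4 + 0 * X' ω ^ 3 + 1 * X' ω ^ 2 + (2*C) * X' ω + C^2 := by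
    funext ω; simp only [hYdef]; ring
  have eY4 : (fun ω => Y ω ^ 4)
      = fun ω => 1 * X' ω ^ 4 + (4*C) * X' ω ^ 3 + (6*C^2) * X' ω ^ 2 + (4*C^3) * X' ω + C^4 := by
    funext ω; simp only [hYdef]; ring
  have iY : Integrable Y μ := hX1'.add (integrable_const C)
  have iY2 : Integrable (fun ω => Y ω ^ 2) μ := by rw [eY2]; exact key _ _ _ _ _
  have iY4 : Integrable (fun ω => Y ω ^ 4) μ := by rw [eY4]; exact key _ _ _ _ _
  have iYabs : Integrable (fun ω => |Y ω|) μ := iY.abs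
  have iW : Integrable W μ := iY.neg.pos_part
  have hWnn : ∀ ω, 0 ≤ W ω := fun ω => le_max_right _ _
  have hW4leY4 : ∀ ω, W ω ^ 4 ≤ Y ω ^ 4 := by
    intro ω
    have h1 : W ω ≤ |Y ω| := by
      simp only [hWdef]
      exact max_le (neg_le_abs _) (abs_nonneg _)
    calc W ω ^ 4 ≤ |Y ω| ^ 4 := pow_le_pow_left₀ (hWnn ω) h1 4
    _ = Y ω ^ 4 := by rw [← abs_pow, abs_of_nonneg (by positivity)]
  have iW4 : Integrable (fun ω => W ω ^ 4) μ := by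
    refine iY4.mono ?_ ?_
    · exact (iW.aestronglyMeasurable.aemeasurable.pow_const 4).aestronglyMeasurable
    · refine Filter.Eventually.of_forall fun ω => ?_
      rw [Real.norm_eq_abs, Real.norm_eq_abs, abs_of_nonneg (by positivity : (0:ℝ) ≤ W ω ^ 4)]
      exact (hW4leY4 ω).trans (le_abs_self _)
  -- moments of Y
  have jY : ∫ ω, Y ω ∂μ = C := by
    simp only [hYdef]
    rw [integral_add hX1' (integrable_const C), hm1', integral_const]
    simp
  have jY2 : ∫ ω, Y ω ^ 2 ∂μ = A + C ^ 2 := by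
    rw [eY2, jpoly]; ring
  have jY4 : ∫ ω, Y ω ^ 4 ∂μ ≤ 6 * A * C ^ 2 + B + C ^ 4 := by
    rw [eY4, jpoly]
    nlinarith [hm4']
  have q4nn : 0 ≤ ∫ ω, Y ω ^ 4 ∂μ :=
    integral_nonneg fun ω => by positivity
  have hann : 0 ≤ ∫ ω, |Y ω| ∂μ := integral_nonneg fun ω => abs_nonneg _
  -- |Y| = Y + 2W
  have jabs : ∫ ω, |Y ω| ∂μ = C + 2 * ∫ ω, W ω ∂μ := by
    have e : (fun ω => |Y ω|) = fun ω => Y ω + 2 * W ω := by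
      funext ω
      simp only [hWdef]
      rcases le_total 0 (Y ω) with h | h
      · rw [abs_of_nonneg h, max_eq_right (by linarith)]; ring
      · rw [abs_of_nonpos h, max_eq_left (by linarith)]; ring
    rw [e, integral_add iY (iW.const_mul _), integral_const_mul, jY]
  have hwnn : 0 ≤ ∫ ω, W ω ∂μ := integral_nonneg hWnn
  -- Step A
  have stepA : (A + C ^ 2) ^ 3 ≤ (∫ ω, |Y ω| ∂μ) ^ 2 * ∫ ω, Y ω ^ 4 ∂μ := by
    refine aux_cube hann q4nn fun t ht => ?_
    have hmono : ∫ ω, 3*t^2 * Y ω ^ 2 ∂μ ≤ ∫ ω, (2*t^3 * |Y ω| + Y ω ^ 4) ∂μ :=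
      integral_mono (iY2.const_mul _) ((iYabs.const_mul _).add iY4)
        fun ω => pt_cube (Y ω) t ht
    rw [integral_const_mul, integral_add (iYabs.const_mul _) iY4, integral_const_mul, jY2]
      at hmono
    linarith
  -- Step B
  have qWnn : 0 ≤ ∫ ω, W ω ^ 4 ∂μ := integral_nonneg fun ω => by positivity
  have stepB : (∫ ω, W ω ∂μ) ^ 4 ≤ p ^ 3 * ∫ ω, W ω ^ 4 ∂μ := by
    refine aux_quartic hwnn hp0 qWnn fun t ht => ?_
    have hmono : ∫ ω, 4*t^3 * W ω ∂μ
        ≤ ∫ ω, (E.indicator (fun _ => 3*t^4) ω + W ω ^ 4) ∂μ := by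
      refine integral_mono (iW.const_mul _)
        (((integrable_const (3*t^4)).indicator hE).add iW4) fun ω => ?_
      by_cases hω : ω ∈ E
      · rw [Set.indicator_of_mem hω]
        exact pt_quart (W ω) t (hWnn ω) ht
      · rw [Set.indicator_of_notMem hω]
        have hY0 : 0 < Y ω := by
          simp only [hEdef, Set.mem_setOf_eq, not_le] at hω
          simp only [hYdef]; linarith
        have hW0 : W ω = 0 := max_eq_right (by linarith)
        rw [hW0]
        norm_num
    rw [integral_const_mul, integral_add ((integrable_const (3*t^4)).indicator hE) iW4,
      integral_indicator_const _ hE] at hmono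
    have hsm : μ.real E • (3*t^4) = 3*t^4*p := by rw [hpdef, smul_eq_mul, mul_comm]; rfl
    rw [hsm] at hmono
    linarith
  have qWleM : ∫ ω, W ω ^ 4 ∂μ ≤ 6 * A * C ^ 2 + B + C ^ 4 :=
    le_trans (integral_mono iW4 iY4 hW4leY4) jY4
  exact assemble A C (6 * A * C ^ 2 + B + C ^ 4) p (∫ ω, Y ω ^ 4 ∂μ) (∫ ω, W ω ^ 4 ∂μ)
    (∫ ω, |Y ω| ∂μ) (∫ ω, W ω ∂μ) (by positivity) hpos hp0 jY4 qWleM q4nn hann hwnn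
    stepA stepB jabs hD
end

section
/- Let A ≥ 0 be a real and let X be a real-valued random variable with finite fourth moment satisfying E[X] = 0, E[X²] = A, E[X³] = 0, and E[X⁴] ≤ 3A². Then P[X ≤ −√A/5] ≥ 0.02. -/
open MeasureTheory ProbabilityTheory
open scoped ENNReal BigOperators

/-- Corollary `coro:main-tech`: if `E[X] = 0`, `E[X²] = A`, `E[X³] = 0`,
`E[X⁴] ≤ 3A²`, then `P[X ≤ -√A/5] ≥ 0.02`. -/
theorem anticoncentration_corollary
    {Ω : Type*} [MeasurableSpace Ω] (μ : Measure Ω) [IsProbabilityMeasure μ]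
    (X : Ω → ℝ) (A : ℝ) (hA : 0 ≤ A)
    (hX1 : Integrable X μ)
    (hX2 : Integrable (fun ω => X ω ^ 2) μ)
    (hX3 : Integrable (fun ω => X ω ^ 3) μ)
    (hX4 : Integrable (fun ω => X ω ^ 4) μ)
    (hm1 : ∫ ω, X ω ∂μ = 0)
    (hm2 : ∫ ω, X ω ^ 2 ∂μ = A)
    (hm3 : ∫ ω, X ω ^ 3 ∂μ = 0)
    (hm4 : ∫ ω, X ω ^ 4 ∂μ ≤ 3 * A ^ 2) :
    ENNReal.ofReal 0.02 ≤ μ {ω | X ω ≤ -(Real.sqrt A / 5)} := by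
  rcases hA.eq_or_lt with hA0 | hApos
  · -- degenerate case A = 0 : X = 0 a.e.
    have hm2' : ∫ ω, X ω ^ 2 ∂μ = 0 := by rw [hm2, ← hA0]
    have hsq : (fun ω => X ω ^ 2) =ᵐ[μ] 0 :=
      (integral_eq_zero_iff_of_nonneg (fun ω => sq_nonneg (X ω)) hX2).mp hm2'
    have hae : ∀ᵐ ω ∂μ, X ω ≤ -(Real.sqrt A / 5) := by
      filter_upwards [hsq] with ω hω
      have hx0 : X ω = 0 := by
        have : X ω ^ 2 = 0 := hω
        exact pow_eq_zero_iff (n := 2) (by norm_num) |>.mp this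
      rw [hx0, ← hA0, Real.sqrt_zero]
      norm_num
    have hnull : μ {ω | ¬ X ω ≤ -(Real.sqrt A / 5)} = 0 := by
      exact hae
    have h1 : (1 : ℝ≥0∞) ≤ μ {ω | X ω ≤ -(Real.sqrt A / 5)} := by
      have hu : (μ Set.univ : ℝ≥0∞) = 1 := measure_univ
      have hsub : (Set.univ : Set Ω) ⊆
          {ω | X ω ≤ -(Real.sqrt A / 5)} ∪ {ω | ¬ X ω ≤ -(Real.sqrt A / 5)} := by
        intro ω _
        by_cases h : X ω ≤ -(Real.sqrt A / 5)
        · exact Or.inl h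
        · exact Or.inr h
      calc (1 : ℝ≥0∞) = μ Set.univ := hu.symm
        _ ≤ μ ({ω | X ω ≤ -(Real.sqrt A / 5)} ∪ {ω | ¬ X ω ≤ -(Real.sqrt A / 5)}) :=
            measure_mono hsub
        _ ≤ μ {ω | X ω ≤ -(Real.sqrt A / 5)} + μ {ω | ¬ X ω ≤ -(Real.sqrt A / 5)} :=
            measure_union_le _ _
        _ = μ {ω | X ω ≤ -(Real.sqrt A / 5)} := by rw [hnull, add_zero]
    calc ENNReal.ofReal 0.02 ≤ 1 := by
          rw [ENNReal.ofReal_le_one]; norm_num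
      _ ≤ _ := h1
  · -- main case A > 0
    set s : ℝ := Real.sqrt A with hs_def
    have hs : 0 < s := Real.sqrt_pos.mpr hApos
    have hs2 : s ^ 2 = A := Real.sq_sqrt hA
    -- measurable version of X
    have hXm := hX1.1
    set X' : Ω → ℝ := hXm.mk X with hX'def
    have hX'meas : StronglyMeasurable X' := hXm.stronglyMeasurable_mk
    have hXX' : X =ᵐ[μ] X' := hXm.ae_eq_mk
    set S' : Set Ω := {ω | X' ω ≤ -(Real.sqrt A / 5)} with hS'def
    have hS'meas : MeasurableSet S' :=
      hX'meas.measurable measurableSet_Iic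
    -- the quartic test function
    set f : Ω → ℝ := fun ω =>
      (1/24) * (-(X ω / s)^4 + (177/25)*(X ω / s)^2 - (784/125)*(X ω / s) - 192/125)
      with hf_def
    -- integrability pieces
    have hY1i : Integrable (fun ω => X ω / s) μ := hX1.div_const s
    have hY2i : Integrable (fun ω => (X ω / s)^2) μ := by
      have : (fun ω => (X ω / s)^2) = fun ω => X ω ^ 2 / A := by
        funext ω; rw [div_pow, hs2]
      rw [this]; exact hX2.div_const A
    have hY4i : Integrable (fun ω => (X ω / s)^4) μ := by
      have : (fun ω => (X ω / s)^4) = fun ω => X ω ^ 4 / A ^ 2 := by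
        funext ω; rw [div_pow, ← hs2]; ring
      rw [this]; exact hX4.div_const (A ^ 2)
    have hfi : Integrable f μ := by
      apply Integrable.const_mul
      exact ((((hY4i.neg).add (hY2i.const_mul _)).sub (hY1i.const_mul _)).sub
        (integrable_const _))
    -- moments of Y = X / s
    have h1 : ∫ ω, X ω / s ∂μ = 0 := by
      rw [integral_div, hm1, zero_div]
    have h2 : ∫ ω, (X ω / s)^2 ∂μ = 1 := by
      have : (fun ω => (X ω / s)^2) = fun ω => X ω ^ 2 / A := by
        funext ω; rw [div_pow, hs2]
      rw [this, integral_div, hm2, div_self (ne_of_gt hApos)]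
    have h4 : ∫ ω, (X ω / s)^4 ∂μ ≤ 3 := by
      have heq : (fun ω => (X ω / s)^4) = fun ω => X ω ^ 4 / A ^ 2 := by
        funext ω; rw [div_pow, ← hs2]; ring
      rw [heq, integral_div]
      rw [div_le_iff₀ (by positivity)]
      linarith
    -- value of the integral of f
    have hfint_ge : (0.106 : ℝ) ≤ ∫ ω, f ω ∂μ := by
      have : ∫ ω, f ω ∂μ =
          (1/24) * (-(∫ ω, (X ω / s)^4 ∂μ) + (177/25)*(∫ ω, (X ω / s)^2 ∂μ)
            - (784/125)*(∫ ω, X ω / s ∂μ) - 192/125) := by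
        have i4 : Integrable (fun ω => -(X ω / s)^4) μ := by exact hY4i.neg
        have i2' : Integrable (fun ω => (177/25 : ℝ)*(X ω / s)^2) μ := by
          exact hY2i.const_mul _
        have i1' : Integrable (fun ω => (784/125 : ℝ)*(X ω / s)) μ := by
          exact hY1i.const_mul _
        have i42 : Integrable (fun ω => -(X ω / s)^4 + (177/25 : ℝ)*(X ω / s)^2) μ := by
          exact i4.add i2'
        have i421 : Integrable
            (fun ω => -(X ω / s)^4 + (177/25 : ℝ)*(X ω / s)^2 - (784/125 : ℝ)*(X ω / s)) μ := by
          exact i42.sub i1'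
        rw [hf_def, integral_const_mul,
          integral_sub i421 (integrable_const _),
          integral_sub i42 i1',
          integral_add i4 i2',
          integral_neg, integral_const_mul, integral_const_mul, integral_const]
        simp [measure_univ]
      rw [this, h1, h2]
      nlinarith [h4]
    -- pointwise bound : f ≤ indicator of S'
    have hptwise : f ≤ᵐ[μ] S'.indicator (fun _ => (1:ℝ)) := by
      filter_upwards [hXX'] with ω hω
      by_cases hmem : ω ∈ S'
      · rw [Set.indicator_of_mem hmem]
        set y : ℝ := X ω / s with hy_def
        show (1/24) * (-y^4 + (177/25)*y^2 - (784/125)*y - 192/125) ≤ 1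
        nlinarith [sq_nonneg (y^2 - 22/5), sq_nonneg (y + 392/215)]
      · rw [Set.indicator_of_notMem hmem]
        have hX'gt : -(Real.sqrt A / 5) < X' ω := lt_of_not_ge hmem
        have hXgt : -(s / 5) < X ω := by rw [hω]; exact hX'gt
        have hy : -(1/5 : ℝ) < X ω / s := by
          rw [lt_div_iff₀ hs]; nlinarith
        set y : ℝ := X ω / s with hy_def
        show (1/24) * (-y^4 + (177/25)*y^2 - (784/125)*y - 192/125) ≤ 0
        have ha : (0:ℝ) ≤ y + 1/5 := by linarith
        have hb : (0:ℝ) ≤ y + 3 := by linarith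
        nlinarith [mul_nonneg (mul_nonneg ha hb) (sq_nonneg (y - 8/5))]
    -- compare with the measure of S'
    have hind_i : Integrable (S'.indicator (fun _ => (1:ℝ))) μ :=
      (integrable_const (1:ℝ)).indicator hS'meas
    have hle : ∫ ω, f ω ∂μ ≤ (μ S').toReal := by
      have := integral_mono_ae hfi hind_i hptwise
      rwa [integral_indicator_const (1:ℝ) hS'meas, smul_eq_mul, mul_one] at this
    have hS'big : ENNReal.ofReal 0.02 ≤ μ S' := by
      calc ENNReal.ofReal 0.02 ≤ ENNReal.ofReal ((μ S').toReal) :=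
            ENNReal.ofReal_le_ofReal (by linarith)
        _ = μ S' := ENNReal.ofReal_toReal (measure_ne_top μ _)
    -- transfer from S' to the original set
    have hmono : μ S' ≤ μ {ω | X ω ≤ -(Real.sqrt A / 5)} := by
      apply measure_mono_ae
      filter_upwards [hXX'] with ω hω
      intro hmem
      show X ω ≤ -(Real.sqrt A / 5)
      rw [hω]; exact hmem
    exact le_trans hS'big hmono
end

section
/- Let Y be a real-valued random variable with finite fourth moment, 0 < E[Y⁴], and let C = E[Y]. Then E[|Y| · 1{Y ≤ 0}] ≥ (1/2) · ( (E[Y²]³ / E[Y⁴])^{1/2} − C ). -/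
/-!
Since `|y| · 1{y ≤ 0} = (|y| - y) / 2`, the claim is `√(E[Y²]³ / E[Y⁴]) ≤ E|Y|`. This is the
moment interpolation `E[Y²]³ ≤ E[|Y|]² E[Y⁴]`, i.e. Hölder's inequality with exponents `3/2` and
`3` applied to `Y² = |Y|^{2/3} · |Y|^{4/3}`.
-/

open MeasureTheory

section

variable {α : Type*} [MeasurableSpace α] {μ : Measure α} {f : α → ℝ}

theorem memLp_abs_rpow_of_integrable (hf : AEStronglyMeasurable f μ) {r s : ℝ} (hs : 0 < s)
    (h : Integrable (fun x => |f x| ^ (r * s)) μ) :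
    MemLp (fun x => |f x| ^ r) (ENNReal.ofReal s) μ := by
  rw [← integrable_norm_rpow_iff (hf.aemeasurable.abs.pow_const r).aestronglyMeasurable
      (by simpa using hs) ENNReal.ofReal_ne_top, ENNReal.toReal_ofReal hs.le]
  refine h.congr (ae_of_all _ fun x => ?_)
  simp only [Real.norm_eq_abs, abs_of_nonneg (Real.rpow_nonneg (abs_nonneg _) _),
    Real.rpow_mul (abs_nonneg _)]

theorem integral_sq_pow_three_le (hf : Integrable f μ) (hf4 : Integrable (fun x => f x ^ 4) μ) :
    (∫ x, f x ^ 2 ∂μ) ^ 3 ≤ (∫ x, |f x| ∂μ) ^ 2 * ∫ x, f x ^ 4 ∂μ := by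
  have hpq : (3 / 2 : ℝ).HolderConjugate 3 := by
    rw [Real.holderConjugate_iff]; norm_num
  have habs4 : ∀ x, |f x| ^ (4 : ℝ) = f x ^ 4 := fun x => by
    rw [show (4 : ℝ) = (4 : ℕ) by norm_num, Real.rpow_natCast, Even.pow_abs (by decide)]
  have hmul : ∀ x, |f x| ^ (2 / 3 : ℝ) * |f x| ^ (4 / 3 : ℝ) = f x ^ 2 := fun x => by
    rw [← Real.rpow_add' (abs_nonneg _) (by norm_num),
      show (2 / 3 + 4 / 3 : ℝ) = (2 : ℕ) by norm_num, Real.rpow_natCast, sq_abs]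
  have hleft : ∀ x, (|f x| ^ (2 / 3 : ℝ)) ^ (3 / 2 : ℝ) = |f x| := fun x => by
    rw [← Real.rpow_mul (abs_nonneg _)]; norm_num
  have hright : ∀ x, (|f x| ^ (4 / 3 : ℝ)) ^ (3 : ℝ) = f x ^ 4 := fun x => by
    rw [← Real.rpow_mul (abs_nonneg _), show (4 / 3 * 3 : ℝ) = 4 by norm_num, habs4]
  have holder := integral_mul_le_Lp_mul_Lq_of_nonneg hpq
    (f := fun x => |f x| ^ (2 / 3 : ℝ)) (g := fun x => |f x| ^ (4 / 3 : ℝ))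
    (ae_of_all _ fun _ => by positivity) (ae_of_all _ fun _ => by positivity)
    (memLp_abs_rpow_of_integrable hf.1 (by norm_num) (by norm_num; exact hf.abs))
    (memLp_abs_rpow_of_integrable hf.1 (by norm_num)
      (by rw [show (4 / 3 * 3 : ℝ) = 4 by norm_num]; simpa only [habs4]))
  simp only [hmul, hleft, hright] at holder
  have hA : 0 ≤ ∫ x, |f x| ∂μ := integral_nonneg fun _ => abs_nonneg _
  have hD : 0 ≤ ∫ x, f x ^ 4 ∂μ := integral_nonneg fun _ => by positivity
  calc (∫ x, f x ^ 2 ∂μ) ^ 3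
      ≤ ((∫ x, |f x| ∂μ) ^ (1 / (3 / 2) : ℝ) * (∫ x, f x ^ 4 ∂μ) ^ (1 / 3 : ℝ)) ^ 3 :=
        pow_le_pow_left₀ (integral_nonneg fun _ => sq_nonneg _) holder 3
    _ = (∫ x, |f x| ∂μ) ^ 2 * ∫ x, f x ^ 4 ∂μ := by
        rw [mul_pow, ← Real.rpow_mul_natCast hA, ← Real.rpow_mul_natCast hD]
        norm_num

theorem integral_abs_mul_indicator_nonpos (hf : Integrable f μ) :
    ∫ x, |f x| * Set.indicator {y | f y ≤ 0} (fun _ => (1 : ℝ)) x ∂μ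
      = ((∫ x, |f x| ∂μ) - ∫ x, f x ∂μ) / 2 := by
  have hpoint : ∀ x, |f x| * Set.indicator {y | f y ≤ 0} (fun _ => (1 : ℝ)) x
      = (|f x| - f x) / 2 := fun x => by
    by_cases hx : f x ≤ 0
    · simp only [hx, abs_of_nonpos hx, Set.mem_ofPred_eq, Set.indicator_of_mem, mul_one]; ring
    · simp [hx, abs_of_pos (not_le.mp hx)]
  rw [integral_congr_ae (ae_of_all _ hpoint), integral_div, integral_sub hf.abs hf]

end

theorem negative_part_lower_bound_general
    {Ω : Type*} [MeasurableSpace Ω] (μ : Measure Ω)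
    (Y : Ω → ℝ)
    (hY1 : Integrable Y μ)
    (hY4 : Integrable (fun ω => Y ω ^ 4) μ) :
    (1 / 2) * (((∫ ω, Y ω ^ 2 ∂μ) ^ 3 / ∫ ω, Y ω ^ 4 ∂μ) ^ ((1 : ℝ) / 2) - ∫ ω, Y ω ∂μ)
      ≤ ∫ ω, |Y ω| * Set.indicator {ω' | Y ω' ≤ 0} (fun _ => (1 : ℝ)) ω ∂μ := by
  have hA : 0 ≤ ∫ ω, |Y ω| ∂μ := integral_nonneg fun _ => abs_nonneg _
  have hmoment : ((∫ ω, Y ω ^ 2 ∂μ) ^ 3 / ∫ ω, Y ω ^ 4 ∂μ) ^ ((1 : ℝ) / 2) ≤ ∫ ω, |Y ω| ∂μ := by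
    rw [← Real.sqrt_eq_rpow, Real.sqrt_le_left hA]
    exact div_le_of_le_mul₀ (integral_nonneg fun _ => by positivity) (sq_nonneg _)
      (integral_sq_pow_three_le hY1 hY4)
  rw [integral_abs_mul_indicator_nonpos hY1]
  linarith

/-- Lower bound on the negative-part first moment (equation (3.5) in the paper):
`E[|Y|·1{Y ≤ 0}] ≥ (1/2)·((E[Y²]³/E[Y⁴])^{1/2} − E[Y])`. -/
theorem negative_part_lower_bound
    {Ω : Type*} [MeasurableSpace Ω] (μ : Measure Ω) [IsProbabilityMeasure μ]
    (Y : Ω → ℝ)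
    (hY1 : Integrable Y μ)
    (hY2 : Integrable (fun ω => Y ω ^ 2) μ)
    (hY3 : Integrable (fun ω => Y ω ^ 3) μ)
    (hY4 : Integrable (fun ω => Y ω ^ 4) μ)
    (h4pos : 0 < ∫ ω, Y ω ^ 4 ∂μ) :
    (1 / 2) * (((∫ ω, Y ω ^ 2 ∂μ) ^ 3 / ∫ ω, Y ω ^ 4 ∂μ) ^ ((1 : ℝ) / 2) - ∫ ω, Y ω ∂μ)
      ≤ ∫ ω, |Y ω| * Set.indicator {ω' | Y ω' ≤ 0} (fun _ => (1 : ℝ)) ω ∂μ :=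
  negative_part_lower_bound_general μ Y hY1 hY4
end

section
/- Let Y be a real-valued random variable with finite fourth moment, 0 < E[Y⁴], and let C = E[Y]. Then P[Y ≤ 0] ≥ (max{0, (E[Y²]³ / E[Y⁴])^{1/2} − C})^{4/3} / (2^{4/3} · E[Y⁴]^{1/3}). -/
open MeasureTheory

/-!
With `Y⁻` the negative part, `E|Y| = E Y + 2 E Y⁻`. Two Cauchy–Schwarz steps,
`(E Y²)² ≤ E|Y| · E|Y|³` and `(E|Y|³)² ≤ E Y² · E Y⁴`, interpolate `(E Y²)³ ≤ (E|Y|)² E Y⁴`,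
so `(E[Y²]³ / E[Y⁴])^{1/2} - E Y ≤ 2 E Y⁻`. As `Y⁻` vanishes off `{Y ≤ 0}`, Cauchy–Schwarz
against the indicator of that set, applied to `Y⁻` and to `(Y⁻)²`, gives
`(E Y⁻)⁴ ≤ P[Y ≤ 0]³ E (Y⁻)⁴ ≤ P[Y ≤ 0]³ E Y⁴`; taking cube roots yields the bound.
-/

section Moments

variable {α : Type*} [MeasurableSpace α] {μ : Measure α}

theorem sq_integral_mul_le_integral_sq_mul_integral_sq {f g : α → ℝ}
    (hf : MemLp f 2 μ) (hg : MemLp g 2 μ) :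
    (∫ x, f x * g x ∂μ) ^ 2 ≤ (∫ x, f x ^ 2 ∂μ) * ∫ x, g x ^ 2 ∂μ := by
  have holder := integral_mul_norm_le_Lp_mul_Lq Real.HolderConjugate.two_two
    (by simpa using hf) (by simpa using hg)
  simp only [Real.norm_eq_abs, Real.rpow_two, sq_abs, ← Real.sqrt_eq_rpow] at holder
  calc (∫ x, f x * g x ∂μ) ^ 2 = |∫ x, f x * g x ∂μ| ^ 2 := (sq_abs _).symm
    _ ≤ (√(∫ x, f x ^ 2 ∂μ) * √(∫ x, g x ^ 2 ∂μ)) ^ 2 := by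
      gcongr
      exact abs_integral_le_integral_abs.trans (by simpa only [abs_mul] using holder)
    _ = (∫ x, f x ^ 2 ∂μ) * ∫ x, g x ^ 2 ∂μ := by
      rw [mul_pow, Real.sq_sqrt (integral_nonneg fun _ => sq_nonneg _),
        Real.sq_sqrt (integral_nonneg fun _ => sq_nonneg _)]

theorem sq_integral_le_measureReal_mul_integral_sq [IsFiniteMeasure μ] {f : α → ℝ} {s : Set α}
    (hf : MemLp f 2 μ) (hfs : ∀ x ∉ s, f x = 0) :
    (∫ x, f x ∂μ) ^ 2 ≤ μ.real s * ∫ x, f x ^ 2 ∂μ := by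
  have cs := sq_integral_mul_le_integral_sq_mul_integral_sq (hf.restrict s)
    (memLp_const (1 : ℝ) : MemLp (fun _ => (1 : ℝ)) 2 (μ.restrict s))
  simp only [mul_one, one_pow, setIntegral_const, smul_eq_mul] at cs
  rwa [setIntegral_eq_integral_of_forall_compl_eq_zero hfs,
    setIntegral_eq_integral_of_forall_compl_eq_zero fun x hx => by simp [hfs x hx], mul_comm] at cs

theorem pow_four_integral_le_measureReal_pow_three_mul [IsFiniteMeasure μ] {f : α → ℝ}
    {s : Set α} (hf : MemLp f 2 μ) (hf2 : MemLp (fun x => f x ^ 2) 2 μ)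
    (hfs : ∀ x ∉ s, f x = 0) :
    (∫ x, f x ∂μ) ^ 4 ≤ μ.real s ^ 3 * ∫ x, f x ^ 4 ∂μ := by
  have h1 := sq_integral_le_measureReal_mul_integral_sq hf hfs
  have h2 := sq_integral_le_measureReal_mul_integral_sq (s := s) hf2 fun x hx => by simp [hfs x hx]
  simp only [← pow_mul] at h2
  calc (∫ x, f x ∂μ) ^ 4 = ((∫ x, f x ∂μ) ^ 2) ^ 2 := by ring
    _ ≤ (μ.real s * ∫ x, f x ^ 2 ∂μ) ^ 2 := pow_le_pow_left₀ (sq_nonneg _) h1 2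
    _ = μ.real s ^ 2 * (∫ x, f x ^ 2 ∂μ) ^ 2 := by ring
    _ ≤ μ.real s ^ 2 * (μ.real s * ∫ x, f x ^ 4 ∂μ) := by gcongr
    _ = μ.real s ^ 3 * ∫ x, f x ^ 4 ∂μ := by ring

theorem pow_three_integral_sq_le_sq_integral_abs_mul {Y : α → ℝ} (h1 : Integrable Y μ)
    (h2 : Integrable (fun x => Y x ^ 2) μ) (h3 : Integrable (fun x => Y x ^ 3) μ)
    (h4 : Integrable (fun x => Y x ^ 4) μ) :
    (∫ x, Y x ^ 2 ∂μ) ^ 3 ≤ (∫ x, |Y x| ∂μ) ^ 2 * ∫ x, Y x ^ 4 ∂μ := by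
  have hY := h1.aestronglyMeasurable
  set M1 := ∫ x, |Y x| ∂μ
  set M2 := ∫ x, Y x ^ 2 ∂μ
  set M3 := ∫ x, |Y x| ^ 3 ∂μ
  set M4 := ∫ x, Y x ^ 4 ∂μ
  have hM1 : 0 ≤ M1 := integral_nonneg fun _ => abs_nonneg _
  have hM2 : 0 ≤ M2 := integral_nonneg fun _ => sq_nonneg _
  have hM4 : 0 ≤ M4 := integral_nonneg fun _ => by positivity
  have cs1 : M2 ^ 2 ≤ M1 * M3 := by
    have := sq_integral_mul_le_integral_sq_mul_integral_sq (μ := μ)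
      (f := fun x => √|Y x|) (g := fun x => √|Y x| * |Y x|)
      ((memLp_two_iff_integrable_sq (by fun_prop)).2 <| h1.abs.congr <|
        .of_forall fun x => (Real.sq_sqrt (abs_nonneg _)).symm)
      ((memLp_two_iff_integrable_sq (by fun_prop)).2 <| h3.abs.congr <|
        .of_forall fun x => by simp only [abs_pow, mul_pow, Real.sq_sqrt (abs_nonneg _)]; ring)
    convert this using 3 <;> funext x
    · rw [← mul_assoc, Real.mul_self_sqrt (abs_nonneg _), abs_mul_abs_self, sq]
    · rw [Real.sq_sqrt (abs_nonneg _)]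
    · rw [mul_pow, Real.sq_sqrt (abs_nonneg _)]; ring
  have cs2 : M3 ^ 2 ≤ M2 * M4 := by
    have := sq_integral_mul_le_integral_sq_mul_integral_sq (μ := μ)
      (f := fun x => |Y x|) (g := fun x => Y x ^ 2)
      ((memLp_two_iff_integrable_sq (by fun_prop)).2 <| by simpa only [sq_abs] using h2)
      ((memLp_two_iff_integrable_sq (by fun_prop)).2 <| by simpa only [← pow_mul] using h4)
    convert this using 3 <;> funext x
    · rw [← sq_abs (Y x)]; ring
    · rw [sq_abs]
    · ring
  rcases hM2.eq_or_lt with hM2 | hM2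
  · rw [← hM2, zero_pow three_ne_zero]; positivity
  · have : M2 ^ 4 ≤ M1 ^ 2 * (M2 * M4) := by
      calc M2 ^ 4 = (M2 ^ 2) ^ 2 := by ring
        _ ≤ (M1 * M3) ^ 2 := pow_le_pow_left₀ (by positivity) cs1 2
        _ = M1 ^ 2 * M3 ^ 2 := by ring
        _ ≤ M1 ^ 2 * (M2 * M4) := by gcongr
    nlinarith

theorem pow_four_integral_negPart_le [IsFiniteMeasure μ] {Y : α → ℝ}
    (hY : AEStronglyMeasurable Y μ) (hY2 : Integrable (fun x => Y x ^ 2) μ)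
    (hY4 : Integrable (fun x => Y x ^ 4) μ) :
    (∫ x, (Y x)⁻ ∂μ) ^ 4 ≤ μ.real {x | Y x ≤ 0} ^ 3 * ∫ x, Y x ^ 4 ∂μ := by
  have negPart_le_abs : ∀ x : ℝ, x⁻ ≤ |x| := fun x => max_le (neg_le_abs x) (abs_nonneg x)
  have hYL2 : MemLp Y 2 μ := (memLp_two_iff_integrable_sq hY).2 hY2
  have hY2L2 : MemLp (fun x => Y x ^ 2) 2 μ :=
    (memLp_two_iff_integrable_sq (by fun_prop)).2 (by simpa only [← pow_mul] using hY4)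
  have hN2 : MemLp (fun x => (Y x)⁻ ^ 2) 2 μ := hY2L2.mono' (by fun_prop) <| .of_forall fun x => by
    rw [Real.norm_eq_abs, abs_of_nonneg (by positivity), ← sq_abs (Y x)]
    exact pow_le_pow_left₀ (negPart_nonneg _) (negPart_le_abs _) 2
  refine (pow_four_integral_le_measureReal_pow_three_mul hYL2.neg_part hN2
    fun x hx => negPart_eq_zero.2 (not_le.1 hx).le).trans ?_
  refine mul_le_mul_of_nonneg_left (integral_mono_of_nonneg (.of_forall fun x => by positivity)
    hY4 (.of_forall fun x => ?_)) (by positivity)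
  exact (pow_le_pow_left₀ (negPart_nonneg _) (negPart_le_abs _) 4).trans_eq
    (Even.pow_abs ⟨2, rfl⟩ _)

theorem integral_abs_eq_integral_add_two_mul_integral_negPart {Y : α → ℝ} (hY : Integrable Y μ) :
    ∫ x, |Y x| ∂μ = ∫ x, Y x ∂μ + 2 * ∫ x, (Y x)⁻ ∂μ := by
  have decomp : ∀ x, |Y x| = Y x + 2 * (Y x)⁻ := fun x => by
    linarith [abs_sub_eq_two_nsmul_negPart (Y x), two_nsmul (Y x)⁻]
  have hneg : Integrable (fun x => (Y x)⁻) μ := hY.neg_part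
  rw [integral_congr_ae (.of_forall decomp), integral_add hY (hneg.const_mul 2),
    integral_const_mul]

end Moments

theorem max_sqrt_sub_le {m2 m4 c e : ℝ} (hm4 : 0 ≤ m4) (he : 0 ≤ e) (hce : 0 ≤ c + 2 * e)
    (h : m2 ^ 3 ≤ (c + 2 * e) ^ 2 * m4) :
    max 0 ((m2 ^ 3 / m4) ^ ((1 : ℝ) / 2) - c) ≤ 2 * e := by
  refine max_le (by linarith) ?_
  have : √(m2 ^ 3 / m4) ≤ c + 2 * e := by
    simpa only [Real.sqrt_sq hce] using
      Real.sqrt_le_sqrt (div_le_of_le_mul₀ hm4 (sq_nonneg _) h)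
  rw [← Real.sqrt_eq_rpow]
  linarith

theorem rpow_four_thirds_div_le {t e m p : ℝ} (ht : 0 ≤ t) (hm : 0 ≤ m) (hp : 0 ≤ p)
    (hte : t ≤ 2 * e) (he : e ^ 4 ≤ p ^ 3 * m) :
    t ^ ((4 : ℝ) / 3) / ((2 : ℝ) ^ ((4 : ℝ) / 3) * m ^ ((1 : ℝ) / 3)) ≤ p := by
  have cube : ∀ x : ℝ, 0 ≤ x → ∀ a : ℝ, (x ^ (a / 3)) ^ 3 = x ^ a := fun x hx a => by
    rw [← Real.rpow_mul_natCast hx]; norm_num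
  refine div_le_of_le_mul₀ (by positivity) hp ?_
  rw [← pow_le_pow_iff_left₀ (by positivity) (by positivity) three_ne_zero, mul_pow, mul_pow,
    cube t ht, cube 2 zero_le_two, cube m hm, Real.rpow_ofNat, Real.rpow_ofNat, Real.rpow_one]
  calc t ^ 4 ≤ (2 * e) ^ 4 := pow_le_pow_left₀ ht hte 4
    _ = 2 ^ 4 * e ^ 4 := by ring
    _ ≤ 2 ^ 4 * (p ^ 3 * m) := by gcongr
    _ = p ^ 3 * (2 ^ 4 * m) := by ring

theorem prob_nonpositive_lower_bound_general
    {Ω : Type*} [MeasurableSpace Ω] (μ : Measure Ω) [IsProbabilityMeasure μ]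
    (Y : Ω → ℝ)
    (hY1 : Integrable Y μ)
    (hY2 : Integrable (fun ω => Y ω ^ 2) μ)
    (hY3 : Integrable (fun ω => Y ω ^ 3) μ)
    (hY4 : Integrable (fun ω => Y ω ^ 4) μ) :
    ENNReal.ofReal
        ((max 0 (((∫ ω, Y ω ^ 2 ∂μ) ^ 3 / ∫ ω, Y ω ^ 4 ∂μ) ^ ((1 : ℝ) / 2) - ∫ ω, Y ω ∂μ))
            ^ ((4 : ℝ) / 3)
          / ((2 : ℝ) ^ ((4 : ℝ) / 3) * (∫ ω, Y ω ^ 4 ∂μ) ^ ((1 : ℝ) / 3)))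
      ≤ μ {ω | Y ω ≤ 0} := by
  have hM4 : 0 ≤ ∫ ω, Y ω ^ 4 ∂μ := integral_nonneg fun _ => by positivity
  have hE : 0 ≤ ∫ ω, (Y ω)⁻ ∂μ := integral_nonneg fun _ => negPart_nonneg _
  have hM1 := integral_abs_eq_integral_add_two_mul_integral_negPart hY1
  have hM1_nonneg : 0 ≤ ∫ ω, |Y ω| ∂μ := integral_nonneg fun _ => abs_nonneg _
  have interpolation := pow_three_integral_sq_le_sq_integral_abs_mul hY1 hY2 hY3 hY4
  rw [hM1] at hM1_nonneg interpolation
  exact ENNReal.ofReal_le_of_le_toReal <| rpow_four_thirds_div_le (le_max_left _ _) hM4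
    measureReal_nonneg (max_sqrt_sub_le hM4 hE hM1_nonneg interpolation)
    (pow_four_integral_negPart_le hY1.aestronglyMeasurable hY2 hY4)

/-- Anti-concentration via moments:
`P[Y ≤ 0] ≥ (max{0, (E[Y²]³/E[Y⁴])^{1/2} − E[Y]})^{4/3} / (2^{4/3}·E[Y⁴]^{1/3})`. -/
theorem prob_nonpositive_lower_bound
    {Ω : Type*} [MeasurableSpace Ω] (μ : Measure Ω) [IsProbabilityMeasure μ]
    (Y : Ω → ℝ)
    (hY1 : Integrable Y μ)
    (hY2 : Integrable (fun ω => Y ω ^ 2) μ)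
    (hY3 : Integrable (fun ω => Y ω ^ 3) μ)
    (hY4 : Integrable (fun ω => Y ω ^ 4) μ)
    (h4pos : 0 < ∫ ω, Y ω ^ 4 ∂μ) :
    ENNReal.ofReal
        ((max 0 (((∫ ω, Y ω ^ 2 ∂μ) ^ 3 / ∫ ω, Y ω ^ 4 ∂μ) ^ ((1 : ℝ) / 2) - ∫ ω, Y ω ∂μ))
            ^ ((4 : ℝ) / 3)
          / ((2 : ℝ) ^ ((4 : ℝ) / 3) * (∫ ω, Y ω ^ 4 ∂μ) ^ ((1 : ℝ) / 3)))
      ≤ μ {ω | Y ω ≤ 0} :=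
  prob_nonpositive_lower_bound_general μ Y hY1 hY2 hY3 hY4
end

section
/- Let σ_1, …, σ_n be independent random variables, each uniform on {−1, 1}, let a ∈ ℝⁿ, and let S = Σ_{j=1}^n a_j σ_j. Then for every real t ≥ 0 such that Σ_{j=1}^n a_j² ≥ 25 t², one has P[S ≤ −t] ≥ 0.02. -/
open MeasureTheory ProbabilityTheory
open scoped ENNReal BigOperators

section Aux

variable {Ω : Type*} [MeasurableSpace Ω] {μ : Measure Ω} [IsProbabilityMeasure μ]

lemma aux_integrable_bdd {f : Ω → ℝ} (hf : Measurable f) (C : ℝ) (h : ∀ ω, |f ω| ≤ C) :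
    Integrable f μ :=
  (integrable_const C).mono' hf.aestronglyMeasurable
    (Filter.Eventually.of_forall fun ω => by simpa [Real.norm_eq_abs] using h ω)

lemma aux_cauchy_schwarz {f g : Ω → ℝ} (hf : Integrable (fun ω => f ω ^ 2) μ)
    (hg : Integrable (fun ω => g ω ^ 2) μ) (hfg : Integrable (fun ω => f ω * g ω) μ) :
    (∫ ω, f ω * g ω ∂μ) ^ 2 ≤ (∫ ω, f ω ^ 2 ∂μ) * ∫ ω, g ω ^ 2 ∂μ := by
  set A := ∫ ω, f ω ^ 2 ∂μ with hA
  set B := ∫ ω, f ω * g ω ∂μ with hB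
  set C := ∫ ω, g ω ^ 2 ∂μ with hCdef
  have hC0 : 0 ≤ C := integral_nonneg fun ω => sq_nonneg _
  have hA0 : 0 ≤ A := integral_nonneg fun ω => sq_nonneg _
  rcases eq_or_lt_of_le hC0 with h0 | hpos
  · have hg0 : (fun ω => g ω ^ 2) =ᵐ[μ] 0 := by
      rw [← integral_eq_zero_iff_of_nonneg (fun ω => sq_nonneg (g ω)) hg]
      exact h0.symm
    have hfg0 : (fun ω => f ω * g ω) =ᵐ[μ] 0 := by
      filter_upwards [hg0] with ω hω
      have hgz : g ω = 0 := by
        have : g ω ^ 2 = 0 := hω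
        exact pow_eq_zero_iff (by norm_num) |>.1 this
      simp [hgz]
    have hBz : B = 0 := by rw [hB, integral_congr_ae hfg0]; simp
    simp [hBz]
    positivity
  · have key : 0 ≤ ∫ ω, (C * f ω - B * g ω) ^ 2 ∂μ := integral_nonneg fun ω => sq_nonneg _
    have expand : ∫ ω, (C * f ω - B * g ω) ^ 2 ∂μ
        = C ^ 2 * A - (2 * C * B) * B + B ^ 2 * C := by
      have heq : (fun ω => (C * f ω - B * g ω) ^ 2)
          = fun ω => C ^ 2 * f ω ^ 2 - (2 * C * B) * (f ω * g ω) + B ^ 2 * g ω ^ 2 := by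
        funext ω; ring
      rw [heq]
      have i1 : Integrable (fun ω => C ^ 2 * f ω ^ 2 - (2 * C * B) * (f ω * g ω)) μ :=
        (hf.const_mul _).sub (hfg.const_mul _)
      have i2 : Integrable (fun ω => B ^ 2 * g ω ^ 2) μ := hg.const_mul _
      rw [integral_add i1 i2, integral_sub (hf.const_mul _) (hfg.const_mul _),
        integral_const_mul, integral_const_mul, integral_const_mul]
    rw [expand] at key
    nlinarith [key, hpos]

section Rad

variable {n : ℕ} {σ : Fin n → Ω → ℝ}

lemma aux_sigma_sq (hval : ∀ j ω, σ j ω = 1 ∨ σ j ω = -1) (j : Fin n) (ω : Ω) :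
    σ j ω ^ 2 = 1 := by
  rcases hval j ω with h | h <;> rw [h] <;> norm_num

lemma aux_sigma_abs (hval : ∀ j ω, σ j ω = 1 ∨ σ j ω = -1) (j : Fin n) (ω : Ω) :
    |σ j ω| = 1 := by
  rcases hval j ω with h | h <;> rw [h] <;> norm_num

lemma aux_int_sigma (hmeas : ∀ j, Measurable (σ j))
    (hval : ∀ j ω, σ j ω = 1 ∨ σ j ω = -1)
    (hunif : ∀ j, μ {ω | σ j ω = 1} = 1 / 2) (j : Fin n) :
    ∫ ω, σ j ω ∂μ = 0 := by
  have hA : MeasurableSet {ω | σ j ω = 1} := hmeas j (measurableSet_singleton 1)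
  have h1 : (fun ω => σ j ω)
      = fun ω => Set.indicator {ω | σ j ω = 1} (fun _ => (2 : ℝ)) ω - 1 := by
    funext ω
    rcases hval j ω with h | h
    · rw [Set.indicator_of_mem (by simpa using h), h]; norm_num
    · rw [Set.indicator_of_notMem (by norm_num [Set.mem_setOf_eq, h]), h]; norm_num
  rw [h1, integral_sub ((integrable_const (2:ℝ)).indicator hA) (integrable_const 1),
    integral_indicator_const _ hA, integral_const, measureReal_def, hunif j]
  simp [ENNReal.toReal_div]

open scoped Classical in
lemma aux_two_point {f : Ω → ℝ} (hf : Measurable f)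
    (hv : ∀ ω, f ω = 1 ∨ f ω = -1)
    (h1 : μ {ω | f ω = 1} = 1 / 2) (h2 : μ {ω | f ω = -1} = 1 / 2)
    {B : Set ℝ} (hB : MeasurableSet B) :
    μ (f ⁻¹' B) = (if (1:ℝ) ∈ B then 1/2 else 0) + (if (-1:ℝ) ∈ B then 1/2 else 0) := by
  classical
  by_cases hb1 : (1:ℝ) ∈ B <;> by_cases hb2 : (-1:ℝ) ∈ B
  · have hset : f ⁻¹' B = Set.univ := by
      ext ω; rcases hv ω with h | h <;> simp [Set.mem_preimage, h, hb1, hb2]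
    rw [hset, measure_univ, if_pos hb1, if_pos hb2]
    exact (ENNReal.add_halves 1).symm
  · have hset : f ⁻¹' B = {ω | f ω = 1} := by
      ext ω
      rcases hv ω with h | h <;>
        norm_num [Set.mem_preimage, Set.mem_setOf_eq, h, hb1, hb2]
    rw [hset, h1, if_pos hb1, if_neg hb2, add_zero]
  · have hset : f ⁻¹' B = {ω | f ω = -1} := by
      ext ω
      rcases hv ω with h | h <;>
        norm_num [Set.mem_preimage, Set.mem_setOf_eq, h, hb1, hb2]
    rw [hset, h2, if_neg hb1, if_pos hb2, zero_add]
  · have hset : f ⁻¹' B = ∅ := by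
      ext ω; rcases hv ω with h | h <;> simp [Set.mem_preimage, h, hb1, hb2]
    rw [hset, if_neg hb1, if_neg hb2, add_zero, measure_empty]

lemma aux_identDistrib_neg (hmeas : ∀ j, Measurable (σ j))
    (hval : ∀ j ω, σ j ω = 1 ∨ σ j ω = -1)
    (hunif : ∀ j, μ {ω | σ j ω = 1} = 1 / 2) (j : Fin n) :
    IdentDistrib (σ j) (fun ω => -σ j ω) μ μ := by
  have hs1 : MeasurableSet {ω | σ j ω = 1} := hmeas j (measurableSet_singleton 1)
  have hm1 : μ {ω | σ j ω = -1} = 1 / 2 := by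
    have hcompl : {ω | σ j ω = -1} = {ω | σ j ω = 1}ᶜ := by
      ext ω
      rcases hval j ω with h | h <;> simp [h] <;> norm_num
    rw [hcompl, measure_compl hs1 (measure_ne_top μ _), measure_univ, hunif j]
    exact ENNReal.sub_eq_of_eq_add (by norm_num) (ENNReal.add_halves 1).symm
  have hneg1 : {ω | -σ j ω = 1} = {ω | σ j ω = -1} := by
    ext ω; rw [Set.mem_setOf_eq, Set.mem_setOf_eq, neg_eq_iff_eq_neg]
  have hneg2 : {ω | -σ j ω = -1} = {ω | σ j ω = 1} := by
    ext ω; rw [Set.mem_setOf_eq, Set.mem_setOf_eq, neg_eq_iff_eq_neg]; norm_num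
  refine ⟨(hmeas j).aemeasurable, (hmeas j).neg.aemeasurable, ?_⟩
  ext B hB
  rw [Measure.map_apply (hmeas j) hB, Measure.map_apply (f := fun ω => -σ j ω) (hmeas j).neg hB]
  rw [aux_two_point (μ := μ) (hmeas j) (hval j) (hunif j) hm1 hB]
  rw [aux_two_point (μ := μ) (f := fun ω => -σ j ω) (hmeas j).neg
    (fun ω => by rcases hval j ω with h | h <;> simp [h])
    (by rw [hneg1]; exact hm1)
    (by rw [hneg2]; exact hunif j) hB]

lemma aux_identDistrib_add {X Y X' Y' : Ω → ℝ} (hX : Measurable X) (hY : Measurable Y)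
    (hX' : Measurable X') (hY' : Measurable Y')
    (h1 : IndepFun X Y μ) (h2 : IndepFun X' Y' μ)
    (hXX' : IdentDistrib X X' μ μ) (hYY' : IdentDistrib Y Y' μ μ) :
    IdentDistrib (fun ω => X ω + Y ω) (fun ω => X' ω + Y' ω) μ μ := by
  have hp : IdentDistrib (fun ω => (X ω, Y ω)) (fun ω => (X' ω, Y' ω)) μ μ := by
    refine ⟨(hX.prodMk hY).aemeasurable, (hX'.prodMk hY').aemeasurable, ?_⟩
    rw [(indepFun_iff_map_prod_eq_prod_map_map hX.aemeasurable hY.aemeasurable).1 h1,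
      (indepFun_iff_map_prod_eq_prod_map_map hX'.aemeasurable hY'.aemeasurable).1 h2,
      hXX'.map_eq, hYY'.map_eq]
  exact hp.comp measurable_add

lemma aux_step2 (b : ℝ) {x T : Ω → ℝ} (hx : Measurable x) (hT : Measurable T)
    (hxv : ∀ ω, x ω ^ 2 = 1) (hxabs : ∀ ω, |x ω| = 1) (hxint : ∫ ω, x ω ∂μ = 0)
    (C : ℝ) (hC0 : 0 ≤ C) (hTb : ∀ ω, |T ω| ≤ C)
    (hind : IndepFun T (fun ω => b * x ω) μ) :
    (∫ ω, (b * x ω + T ω) ^ 2 ∂μ = b ^ 2 + ∫ ω, T ω ^ 2 ∂μ) ∧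
    (∫ ω, (b * x ω + T ω) ^ 4 ∂μ
      = b ^ 4 + 6 * b ^ 2 * (∫ ω, T ω ^ 2 ∂μ) + ∫ ω, T ω ^ 4 ∂μ) := by
  have hτm : Measurable (fun ω => b * x ω) := hx.const_mul b
  have hτT : IndepFun (fun ω => b * x ω) T μ := hind.symm
  have hτT3 : IndepFun (fun ω => b * x ω) (fun ω => T ω ^ 3) μ :=
    hτT.comp measurable_id (measurable_id.pow_const 3)
  have hIτ : ∫ ω, b * x ω ∂μ = 0 := by rw [integral_const_mul, hxint, mul_zero]
  have iT2 : Integrable (fun ω => T ω ^ 2) μ :=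
    aux_integrable_bdd (hT.pow_const 2) (C ^ 2) fun ω => by
      rw [abs_pow]; exact pow_le_pow_left₀ (abs_nonneg _) (hTb ω) 2
  have iT4 : Integrable (fun ω => T ω ^ 4) μ :=
    aux_integrable_bdd (hT.pow_const 4) (C ^ 4) fun ω => by
      rw [abs_pow]; exact pow_le_pow_left₀ (abs_nonneg _) (hTb ω) 4
  have iτT : Integrable (fun ω => (b * x ω) * T ω) μ :=
    aux_integrable_bdd (hτm.mul hT) (|b| * C) fun ω => by
      rw [abs_mul, abs_mul, hxabs ω, mul_one]
      exact mul_le_mul_of_nonneg_left (hTb ω) (abs_nonneg _)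
  have iτT3 : Integrable (fun ω => (b * x ω) * T ω ^ 3) μ :=
    aux_integrable_bdd (hτm.mul (hT.pow_const 3)) (|b| * C ^ 3) fun ω => by
      rw [abs_mul, abs_mul, hxabs ω, mul_one, abs_pow]
      exact mul_le_mul_of_nonneg_left
        (pow_le_pow_left₀ (abs_nonneg _) (hTb ω) 3) (abs_nonneg _)
  have e1 : ∫ ω, (b * x ω) * T ω ∂μ = (∫ ω, b * x ω ∂μ) * ∫ ω, T ω ∂μ :=
    hτT.integral_fun_mul_eq_mul_integral hτm.aestronglyMeasurable hT.aestronglyMeasurable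
  have e3 : ∫ ω, (b * x ω) * T ω ^ 3 ∂μ
      = (∫ ω, b * x ω ∂μ) * ∫ ω, T ω ^ 3 ∂μ :=
    hτT3.integral_fun_mul_eq_mul_integral hτm.aestronglyMeasurable
      (hT.pow_const 3).aestronglyMeasurable
  constructor
  · have hpt : (fun ω => (b * x ω + T ω) ^ 2)
        = fun ω => b ^ 2 + 2 * ((b * x ω) * T ω) + T ω ^ 2 := by
      funext ω
      have h := hxv ω
      linear_combination b ^ 2 * h
    rw [hpt]
    have iA : Integrable (fun ω => b ^ 2 + 2 * ((b * x ω) * T ω)) μ :=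
      (integrable_const _).add (iτT.const_mul 2)
    rw [integral_add iA iT2, integral_add (integrable_const _) (iτT.const_mul 2),
      integral_const, integral_const_mul, e1, hIτ]
    simp
  · have hpt : (fun ω => (b * x ω + T ω) ^ 4)
        = fun ω => b ^ 4 + (4 * b ^ 2) * ((b * x ω) * T ω) + (6 * b ^ 2) * T ω ^ 2
            + 4 * ((b * x ω) * T ω ^ 3) + T ω ^ 4 := by
      funext ω
      have h := hxv ω
      linear_combination (b ^ 4 * (x ω ^ 2 + 1) + 4 * b ^ 3 * T ω * x ω
        + 6 * b ^ 2 * T ω ^ 2) * h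
    rw [hpt]
    have iA : Integrable (fun ω => b ^ 4 + (4 * b ^ 2) * ((b * x ω) * T ω)) μ :=
      (integrable_const _).add (iτT.const_mul _)
    have iB : Integrable (fun ω => b ^ 4 + (4 * b ^ 2) * ((b * x ω) * T ω)
        + (6 * b ^ 2) * T ω ^ 2) μ := iA.add (iT2.const_mul _)
    have iC : Integrable (fun ω => b ^ 4 + (4 * b ^ 2) * ((b * x ω) * T ω)
        + (6 * b ^ 2) * T ω ^ 2 + 4 * ((b * x ω) * T ω ^ 3)) μ :=
      iB.add (iτT3.const_mul _)
    rw [integral_add iC iT4, integral_add iB (iτT3.const_mul _),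
      integral_add iA (iT2.const_mul _),
      integral_add (integrable_const _) (iτT.const_mul _),
      integral_const, integral_const_mul, integral_const_mul, integral_const_mul,
      e1, e3, hIτ]
    simp

lemma aux_sum_indep (hmeas : ∀ j, Measurable (σ j))
    (hindep : iIndepFun σ μ) (a : Fin n → ℝ)
    {s : Finset (Fin n)} {i : Fin n} (hi : i ∉ s) :
    IndepFun (fun ω => ∑ j ∈ s, a j * σ j ω) (fun ω => a i * σ i ω) μ := by
  have hindep' : iIndepFun
      (fun j ω => a j * σ j ω) μ :=
    hindep.comp (fun j x => a j * x) fun j => measurable_const_mul _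
  have h := hindep'.indepFun_finset_sum_of_notMem
    (fun j => (hmeas j).const_mul (a j)) hi
  have hfun : (∑ j ∈ s, fun ω => a j * σ j ω) = fun ω => ∑ j ∈ s, a j * σ j ω := by
    funext ω; simp
  rwa [hfun] at h

lemma aux_moments (hmeas : ∀ j, Measurable (σ j))
    (hval : ∀ j ω, σ j ω = 1 ∨ σ j ω = -1)
    (hunif : ∀ j, μ {ω | σ j ω = 1} = 1 / 2)
    (hindep : iIndepFun σ μ) (a : Fin n → ℝ)
    (s : Finset (Fin n)) :
    (∫ ω, (∑ j ∈ s, a j * σ j ω) ^ 2 ∂μ = ∑ j ∈ s, a j ^ 2) ∧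
    (∫ ω, (∑ j ∈ s, a j * σ j ω) ^ 4 ∂μ ≤ 3 * (∑ j ∈ s, a j ^ 2) ^ 2) := by
  classical
  induction s using Finset.induction with
  | empty => constructor <;> simp
  | @insert i s hi ih =>
    have hTmeas : Measurable (fun ω => ∑ j ∈ s, a j * σ j ω) :=
      Finset.measurable_sum s fun j _ => (hmeas j).const_mul (a j)
    have hTb : ∀ ω, |∑ j ∈ s, a j * σ j ω| ≤ ∑ j ∈ s, |a j| := fun ω => by
      refine (Finset.abs_sum_le_sum_abs _ _).trans (le_of_eq ?_)
      exact Finset.sum_congr rfl fun j _ => by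
        rw [abs_mul, aux_sigma_abs hval j ω, mul_one]
    have hC0 : (0:ℝ) ≤ ∑ j ∈ s, |a j| := Finset.sum_nonneg fun j _ => abs_nonneg _
    have hind := aux_sum_indep hmeas hindep a hi
    have step := aux_step2 (a i) (hmeas i) hTmeas (aux_sigma_sq hval i)
      (aux_sigma_abs hval i) (aux_int_sigma hmeas hval hunif i)
      (∑ j ∈ s, |a j|) hC0 hTb hind
    have hv0 : (0:ℝ) ≤ ∑ j ∈ s, a j ^ 2 := Finset.sum_nonneg fun j _ => sq_nonneg _
    constructor
    · simp only [Finset.sum_insert hi]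
      rw [step.1, ih.1]
    · simp only [Finset.sum_insert hi]
      rw [step.2, ih.1]
      nlinarith [ih.2, sq_nonneg (a i), sq_nonneg (a i ^ 2 - ∑ j ∈ s, a j ^ 2)]

lemma aux_symmetry (hmeas : ∀ j, Measurable (σ j))
    (hval : ∀ j ω, σ j ω = 1 ∨ σ j ω = -1)
    (hunif : ∀ j, μ {ω | σ j ω = 1} = 1 / 2)
    (hindep : iIndepFun σ μ) (a : Fin n → ℝ)
    (s : Finset (Fin n)) :
    IdentDistrib (fun ω => ∑ j ∈ s, a j * σ j ω)
      (fun ω => -∑ j ∈ s, a j * σ j ω) μ μ := by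
  classical
  induction s using Finset.induction with
  | empty =>
    simp only [Finset.sum_empty, neg_zero]
    exact IdentDistrib.refl aemeasurable_const
  | @insert i s hi ih =>
    have hTmeas : Measurable (fun ω => ∑ j ∈ s, a j * σ j ω) :=
      Finset.measurable_sum s fun j _ => (hmeas j).const_mul (a j)
    have hτmeas : Measurable (fun ω => a i * σ i ω) := (hmeas i).const_mul _
    have h1 : IndepFun (fun ω => a i * σ i ω) (fun ω => ∑ j ∈ s, a j * σ j ω) μ :=
      (aux_sum_indep hmeas hindep a hi).symm
    have h2 : IndepFun (fun ω => -(a i * σ i ω)) (fun ω => -∑ j ∈ s, a j * σ j ω) μ :=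
      h1.comp measurable_neg measurable_neg
    have hXX' : IdentDistrib (fun ω => a i * σ i ω) (fun ω => -(a i * σ i ω)) μ μ := by
      have h := (aux_identDistrib_neg hmeas hval hunif i).comp
        (u := fun y => a i * y) (measurable_const_mul _)
      have e : ((fun y => a i * y) ∘ fun ω => -σ i ω) = fun ω => -(a i * σ i ω) := by
        funext ω; simp [Function.comp]
      have e' : ((fun y => a i * y) ∘ σ i) = fun ω => a i * σ i ω := rfl
      rwa [e', e] at h
    have hadd := aux_identDistrib_add hτmeas hTmeas hτmeas.neg hTmeas.neg h1 h2 hXX' ih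
    have e1 : (fun ω => ∑ j ∈ insert i s, a j * σ j ω)
        = fun ω => a i * σ i ω + ∑ j ∈ s, a j * σ j ω := by
      funext ω; rw [Finset.sum_insert hi]
    have e2 : (fun ω => -∑ j ∈ insert i s, a j * σ j ω)
        = fun ω => -(a i * σ i ω) + -∑ j ∈ s, a j * σ j ω := by
      funext ω; rw [Finset.sum_insert hi]; ring
    rw [e1, e2]
    exact hadd

end Rad

end Aux


/-- Anti-concentration for Rademacher sums:
if `σ_1,…,σ_n` are independent uniform `{−1,1}` variables, `S = Σ_j a_j σ_j`,
and `Σ_j a_j² ≥ 25 t²` for `t ≥ 0`, then `P[S ≤ −t] ≥ 0.02`. -/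
theorem rademacher_anticoncentration
    {Ω : Type*} [MeasurableSpace Ω] (μ : Measure Ω) [IsProbabilityMeasure μ]
    (n : ℕ) (σ : Fin n → Ω → ℝ)
    (hmeas : ∀ j, Measurable (σ j))
    (hval : ∀ j ω, σ j ω = 1 ∨ σ j ω = -1)
    (hunif : ∀ j, μ {ω | σ j ω = 1} = 1 / 2)
    (hindep : iIndepFun σ μ)
    (a : Fin n → ℝ) (t : ℝ) (ht : 0 ≤ t)
    (hsum : 25 * t ^ 2 ≤ ∑ j, a j ^ 2) :
    ENNReal.ofReal 0.02 ≤ μ {ω | (∑ j, a j * σ j ω) ≤ -t} := by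
  classical
  by_cases hv0 : (∑ j, a j ^ 2) = 0
  · -- degenerate case : all coefficients vanish and t = 0
    have ha : ∀ j, a j = 0 := by
      intro j
      have h := (Finset.sum_eq_zero_iff_of_nonneg
        (fun j _ => sq_nonneg (a j))).1 hv0 j (Finset.mem_univ j)
      exact pow_eq_zero_iff two_ne_zero |>.1 h
    have ht0 : t = 0 := by
      rw [hv0] at hsum; nlinarith
    have hset : {ω | (∑ j, a j * σ j ω) ≤ -t} = Set.univ := by
      ext ω
      simp [ha, ht0]
    rw [hset, measure_univ]
    exact ENNReal.ofReal_le_one.2 (by norm_num)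
  · have hvnn : (0:ℝ) ≤ ∑ j, a j ^ 2 := Finset.sum_nonneg fun j _ => sq_nonneg _
    have hvpos : (0:ℝ) < ∑ j, a j ^ 2 := lt_of_le_of_ne hvnn (Ne.symm hv0)
    set v : ℝ := ∑ j, a j ^ 2 with hvdef
    have hSmeas : Measurable (fun ω => ∑ j, a j * σ j ω) :=
      Finset.measurable_sum Finset.univ fun j _ => (hmeas j).const_mul (a j)
    have hSb : ∀ ω, |∑ j, a j * σ j ω| ≤ ∑ j, |a j| := fun ω => by
      refine (Finset.abs_sum_le_sum_abs _ _).trans (le_of_eq ?_)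
      exact Finset.sum_congr rfl fun j _ => by
        rw [abs_mul, aux_sigma_abs hval j ω, mul_one]
    set C : ℝ := ∑ j, |a j| with hCdef
    have hM := aux_moments hmeas hval hunif hindep a Finset.univ
    have hm2 : ∫ ω, (∑ j, a j * σ j ω) ^ 2 ∂μ = v := hM.1
    have hm4 : ∫ ω, (∑ j, a j * σ j ω) ^ 4 ∂μ ≤ 3 * v ^ 2 := hM.2
    set A : Set Ω := {ω | v / 25 < (∑ j, a j * σ j ω) ^ 2} with hAdef
    have hAmeas : MeasurableSet A :=
      measurableSet_lt measurable_const (hSmeas.pow_const 2)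
    -- integrability facts
    have iS2 : Integrable (fun ω => (∑ j, a j * σ j ω) ^ 2) μ :=
      aux_integrable_bdd (hSmeas.pow_const 2) (C ^ 2) fun ω => by
        rw [abs_pow]; exact pow_le_pow_left₀ (abs_nonneg _) (hSb ω) 2
    have iS4 : Integrable (fun ω => (∑ j, a j * σ j ω) ^ 4) μ :=
      aux_integrable_bdd (hSmeas.pow_const 4) (C ^ 4) fun ω => by
        rw [abs_pow]; exact pow_le_pow_left₀ (abs_nonneg _) (hSb ω) 4
    have hind_le_one : ∀ ω, |A.indicator (fun _ => (1:ℝ)) ω| ≤ 1 := fun ω => by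
      by_cases h : ω ∈ A <;> simp [Set.indicator_of_mem, Set.indicator_of_notMem, h]
    have hindmeas : Measurable (A.indicator (fun _ => (1:ℝ))) :=
      measurable_const.indicator hAmeas
    have iS2A : Integrable (fun ω => (∑ j, a j * σ j ω) ^ 2
        * A.indicator (fun _ => (1:ℝ)) ω) μ :=
      aux_integrable_bdd ((hSmeas.pow_const 2).mul hindmeas) (C ^ 2 * 1) fun ω => by
        rw [abs_mul, abs_pow]
        exact mul_le_mul (pow_le_pow_left₀ (abs_nonneg _) (hSb ω) 2)
          (hind_le_one ω) (abs_nonneg _) (by positivity)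
    have iS2Ac : Integrable (fun ω => (∑ j, a j * σ j ω) ^ 2
        * Aᶜ.indicator (fun _ => (1:ℝ)) ω) μ :=
      aux_integrable_bdd ((hSmeas.pow_const 2).mul
        (measurable_const.indicator hAmeas.compl)) (C ^ 2 * 1) fun ω => by
        rw [abs_mul, abs_pow]
        refine mul_le_mul (pow_le_pow_left₀ (abs_nonneg _) (hSb ω) 2) ?_
          (abs_nonneg _) (by positivity)
        by_cases h : ω ∈ Aᶜ <;>
          simp [Set.indicator_of_mem, Set.indicator_of_notMem, h]
    -- split the second moment over A and Aᶜ
    have hsplit : ∫ ω, (∑ j, a j * σ j ω) ^ 2 ∂μ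
        = (∫ ω, (∑ j, a j * σ j ω) ^ 2 * A.indicator (fun _ => (1:ℝ)) ω ∂μ)
          + ∫ ω, (∑ j, a j * σ j ω) ^ 2 * Aᶜ.indicator (fun _ => (1:ℝ)) ω ∂μ := by
      have hpt : (fun ω => (∑ j, a j * σ j ω) ^ 2)
          = fun ω => (∑ j, a j * σ j ω) ^ 2 * A.indicator (fun _ => (1:ℝ)) ω
            + (∑ j, a j * σ j ω) ^ 2 * Aᶜ.indicator (fun _ => (1:ℝ)) ω := by
        funext ω
        by_cases h : ω ∈ A
        · rw [Set.indicator_of_mem h,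
            Set.indicator_of_notMem (Set.notMem_compl_iff.2 h)]
          ring
        · rw [Set.indicator_of_notMem h, Set.indicator_of_mem (Set.mem_compl h)]
          ring
      rw [hpt, integral_add iS2A iS2Ac]
    have h_small : ∫ ω, (∑ j, a j * σ j ω) ^ 2 * Aᶜ.indicator (fun _ => (1:ℝ)) ω ∂μ
        ≤ v / 25 := by
      have hle : ∀ ω, (∑ j, a j * σ j ω) ^ 2 * Aᶜ.indicator (fun _ => (1:ℝ)) ω
          ≤ v / 25 := by
        intro ω
        by_cases h : ω ∈ Aᶜ
        · have hA' : ¬ (v / 25 < (∑ j, a j * σ j ω) ^ 2) := h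
          push_neg at hA'
          simpa [Set.indicator_of_mem h] using hA'
        · simp [Set.indicator_of_notMem h]
          positivity
      calc ∫ ω, (∑ j, a j * σ j ω) ^ 2 * Aᶜ.indicator (fun _ => (1:ℝ)) ω ∂μ
          ≤ ∫ _ω, v / 25 ∂μ := integral_mono iS2Ac (integrable_const _) hle
        _ = v / 25 := by simp
    have hEnonneg : 0 ≤ ∫ ω, (∑ j, a j * σ j ω) ^ 2 * A.indicator (fun _ => (1:ℝ)) ω ∂μ :=
      integral_nonneg fun ω => by
        apply mul_nonneg (sq_nonneg _)
        by_cases h : ω ∈ A <;>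
          simp [Set.indicator_of_mem, Set.indicator_of_notMem, h]
    have hlower : 24 / 25 * v
        ≤ ∫ ω, (∑ j, a j * σ j ω) ^ 2 * A.indicator (fun _ => (1:ℝ)) ω ∂μ := by
      have := hsplit
      rw [hm2] at this
      linarith
    -- Cauchy–Schwarz (Paley–Zygmund)
    have if2 : Integrable (fun ω => ((∑ j, a j * σ j ω) ^ 2) ^ 2) μ := by
      have e : (fun ω => ((∑ j, a j * σ j ω) ^ 2) ^ 2)
          = fun ω => (∑ j, a j * σ j ω) ^ 4 := by funext ω; ring
      rw [e]; exact iS4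
    have ig2 : Integrable (fun ω => (A.indicator (fun _ => (1:ℝ)) ω) ^ 2) μ :=
      aux_integrable_bdd (hindmeas.pow_const 2) 1 fun ω => by
        rw [abs_pow]
        calc |A.indicator (fun _ => (1:ℝ)) ω| ^ 2 ≤ 1 ^ 2 :=
              pow_le_pow_left₀ (abs_nonneg _) (hind_le_one ω) 2
          _ = 1 := one_pow 2
    have hcs := aux_cauchy_schwarz (μ := μ) if2 ig2 iS2A
    have hg2 : ∫ ω, (A.indicator (fun _ => (1:ℝ)) ω) ^ 2 ∂μ = (μ A).toReal := by
      have e : (fun ω => (A.indicator (fun _ => (1:ℝ)) ω) ^ 2)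
          = A.indicator (fun _ => (1:ℝ)) := by
        funext ω
        by_cases h : ω ∈ A <;>
          simp [Set.indicator_of_mem, Set.indicator_of_notMem, h]
      rw [e]; exact integral_indicator_one hAmeas
    have hf2 : ∫ ω, ((∑ j, a j * σ j ω) ^ 2) ^ 2 ∂μ ≤ 3 * v ^ 2 := by
      have e : (fun ω => ((∑ j, a j * σ j ω) ^ 2) ^ 2)
          = fun ω => (∑ j, a j * σ j ω) ^ 4 := by funext ω; ring
      rw [e]; exact hm4
    have hmA : (192:ℝ) / 625 ≤ (μ A).toReal := by
      have h1 : (24 / 25 * v) ^ 2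
          ≤ (∫ ω, (∑ j, a j * σ j ω) ^ 2 * A.indicator (fun _ => (1:ℝ)) ω ∂μ) ^ 2 :=
        pow_le_pow_left₀ (by positivity) hlower 2
      have h2 : (∫ ω, (∑ j, a j * σ j ω) ^ 2 * A.indicator (fun _ => (1:ℝ)) ω ∂μ) ^ 2
          ≤ 3 * v ^ 2 * (μ A).toReal := by
        calc _ ≤ (∫ ω, ((∑ j, a j * σ j ω) ^ 2) ^ 2 ∂μ)
              * ∫ ω, (A.indicator (fun _ => (1:ℝ)) ω) ^ 2 ∂μ := hcs
          _ ≤ 3 * v ^ 2 * (μ A).toReal := by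
              rw [hg2]
              exact mul_le_mul_of_nonneg_right hf2 ENNReal.toReal_nonneg
      nlinarith [h1, h2, mul_pos hvpos hvpos]
    -- inclusion of A in the two tails
    have hsub : A ⊆ {ω | t ≤ (∑ j, a j * σ j ω)} ∪ {ω | (∑ j, a j * σ j ω) ≤ -t} := by
      intro ω hω
      have hω' : v / 25 < (∑ j, a j * σ j ω) ^ 2 := hω
      have ht2 : t ^ 2 ≤ v / 25 := by linarith [hsum]
      have habs : t < |∑ j, a j * σ j ω| := by
        nlinarith [abs_nonneg (∑ j, a j * σ j ω), sq_abs (∑ j, a j * σ j ω)]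
      rcases lt_abs.1 habs with h | h
      · exact Or.inl (le_of_lt h)
      · exact Or.inr (show (∑ j, a j * σ j ω) ≤ -t by linarith)
    -- symmetry
    have hsym := aux_symmetry hmeas hval hunif hindep a Finset.univ
    have hsymm_eq : μ {ω | t ≤ (∑ j, a j * σ j ω)} = μ {ω | (∑ j, a j * σ j ω) ≤ -t} := by
      have h := hsym.measure_mem_eq (s := Set.Ici t) measurableSet_Ici
      have e1 : (fun ω => ∑ j, a j * σ j ω) ⁻¹' Set.Ici t
          = {ω | t ≤ (∑ j, a j * σ j ω)} := rfl
      have e2 : (fun ω => -∑ j, a j * σ j ω) ⁻¹' Set.Ici t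
          = {ω | (∑ j, a j * σ j ω) ≤ -t} := by
        ext ω
        simp only [Set.mem_preimage, Set.mem_Ici, Set.mem_setOf_eq]
        constructor <;> intro <;> linarith
      rw [e1, e2] at h
      exact h
    -- put everything together
    have hAineq : μ A ≤ 2 * μ {ω | (∑ j, a j * σ j ω) ≤ -t} := by
      calc μ A ≤ μ ({ω | t ≤ (∑ j, a j * σ j ω)} ∪ {ω | (∑ j, a j * σ j ω) ≤ -t}) :=
            measure_mono hsub
        _ ≤ μ {ω | t ≤ (∑ j, a j * σ j ω)} + μ {ω | (∑ j, a j * σ j ω) ≤ -t} :=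
            measure_union_le _ _
        _ = 2 * μ {ω | (∑ j, a j * σ j ω) ≤ -t} := by rw [hsymm_eq, two_mul]
    have hA_lb : ENNReal.ofReal (192 / 625) ≤ μ A :=
      ENNReal.ofReal_le_of_le_toReal hmA
    have h2q : ENNReal.ofReal (192 / 625) ≤ 2 * μ {ω | (∑ j, a j * σ j ω) ≤ -t} :=
      hA_lb.trans hAineq
    have hq : ENNReal.ofReal (96 / 625) ≤ μ {ω | (∑ j, a j * σ j ω) ≤ -t} := by
      rw [show (192 / 625 : ℝ) = 2 * (96 / 625) by norm_num,
        ENNReal.ofReal_mul (by norm_num : (0:ℝ) ≤ 2), ENNReal.ofReal_ofNat] at h2q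
      exact (ENNReal.mul_le_mul_iff_right (by norm_num) (by norm_num)).1 h2q
    exact le_trans (ENNReal.ofReal_le_ofReal (by norm_num)) hq
end

section
/- In the random bucket model with width b = 900·k for a positive integer k, every ℓ2-k-heavy hitter has strongly aligned bucket signs: for every i ∈ [n] with v_i² > (1/k) · ‖v_tail[k]‖₂², it holds that P[ c · μ_i · sgn(v_i) > 0 | μ_i ≠ 0 ] ≥ 399/400. -/
open MeasureTheory ProbabilityTheory
open scoped ENNReal BigOperators

/-- The `k`-tail norm of `v`: the minimum, over subsets `S ⊆ [n]` of size `min k n`,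
of the ℓ2 norm of `v` restricted to the complement of `S`. -/
noncomputable def tailNorm {n : ℕ} (v : Fin n → ℝ) (k : ℕ) : ℝ :=
  sInf {x : ℝ | ∃ S : Finset (Fin n), S.card = min k n ∧
    x = Real.sqrt (∑ j ∈ Sᶜ, v j ^ 2)}

section Aux

variable {Ω : Type*} [MeasurableSpace Ω] {μ : Measure Ω} [IsProbabilityMeasure μ]

lemma my_integrable_of_bound (g : Ω → ℝ) (hg : Measurable g) (C : ℝ)
    (hC : ∀ ω, |g ω| ≤ C) : Integrable g μ :=
  (integrable_const C).mono' hg.aestronglyMeasurable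
    (Filter.Eventually.of_forall (by simpa [Real.norm_eq_abs] using hC))

lemma my_indep_comp {ι : Type*} {f : ι → Ω → ℝ}
    (hf : iIndepFun f μ) (hmeas : ∀ i, Measurable (f i))
    (S T : Finset ι) (hST : Disjoint S T)
    (g : (S → ℝ) → ℝ) (g' : (T → ℝ) → ℝ) (hg : Measurable g) (hg' : Measurable g') :
    IndepFun (fun ω => g fun i => f i ω) (fun ω => g' fun i => f i ω) μ :=
  (hf.indepFun_finset S T hST hmeas).comp hg hg'

end Aux

set_option maxHeartbeats 2000000 in
/-- With width `b = 900·k`, every ℓ2-`k`-heavy hitter (`v_i² > (1/k)·‖v_tail[k]‖₂²`)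
has strongly aligned bucket signs: `P[c·μ_i·sgn(v_i) > 0 | μ_i ≠ 0] ≥ 399/400`. -/
theorem heavy_hitter_sign_alignment
    {Ω : Type*} [MeasurableSpace Ω] (μ : Measure Ω) [IsProbabilityMeasure μ]
    (n k b : ℕ) (hn : 0 < n) (hk : 0 < k) (hbk : b = 900 * k)
    (h s : Fin n → Ω → ℝ)
    (hmeas_h : ∀ j, Measurable (h j)) (hmeas_s : ∀ j, Measurable (s j))
    (hval_h : ∀ j ω, h j ω = 0 ∨ h j ω = 1)
    (hval_s : ∀ j ω, s j ω = 1 ∨ s j ω = -1)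
    (hprob_h : ∀ j, μ {ω | h j ω = 1} = (b : ℝ≥0∞)⁻¹)
    (hprob_s : ∀ j, μ {ω | s j ω = 1} = 1 / 2)
    (hindep : iIndepFun (Sum.elim h s) μ)
    (v : Fin n → ℝ) (i : Fin n)
    (hheavy : (1 / (k : ℝ)) * tailNorm v k ^ 2 < v i ^ 2) :
    (399 : ℝ≥0∞) / 400 ≤
      μ[|{ω | h i ω * s i ω ≠ 0}]
        {ω | 0 < (∑ j, (h j ω * s j ω) * v j) * (h i ω * s i ω) * Real.sign (v i)} := by
  classical
  -- basic numerics
  have hbne : b ≠ 0 := by omega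
  have hk' : (0:ℝ) < k := by exact_mod_cast hk
  have hbpos : (0:ℝ) < b := by exact_mod_cast Nat.pos_of_ne_zero hbne
  have hb0 : (b:ℝ≥0∞) ≠ 0 := by exact_mod_cast hbne
  have hbtop : (b:ℝ≥0∞) ≠ ∞ := ENNReal.natCast_ne_top b
  have h399 : (399:ℝ≥0∞)/400 ≠ ⊤ := (ENNReal.div_lt_top (by norm_num) (by norm_num)).ne
  -- measurability of the family
  have hmf : ∀ t : Fin n ⊕ Fin n, Measurable (Sum.elim h s t) := by
    rintro (j | j)
    exacts [hmeas_h j, hmeas_s j]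
  -- measurable sets
  have mH : ∀ j, MeasurableSet {ω | h j ω = 1} := fun j =>
    hmeas_h j (measurableSet_singleton 1)
  have mS : ∀ j, MeasurableSet {ω | s j ω = 1} := fun j =>
    hmeas_s j (measurableSet_singleton 1)
  set A : Set Ω := {ω | h i ω = 1} with hA
  have mA : MeasurableSet A := mH i
  have hAeq : {ω | h i ω * s i ω ≠ 0} = A := by
    ext ω
    rcases hval_h i ω with e | e <;> rcases hval_s i ω with e' | e' <;>
      simp [hA, e, e']
  -- basic bounds on values
  have habs1 : ∀ j ω, |h j ω * s j ω| ≤ 1 := by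
    intro j ω
    rcases hval_h j ω with e | e <;> rcases hval_s j ω with e' | e' <;>
      rw [e, e'] <;> norm_num
  have habsh : ∀ j ω, |h j ω| ≤ 1 := by
    intro j ω; rcases hval_h j ω with e | e <;> rw [e] <;> norm_num
  have habss : ∀ j ω, |s j ω| ≤ 1 := by
    intro j ω; rcases hval_s j ω with e | e <;> rw [e] <;> norm_num
  -- integrability
  have intH : ∀ j, Integrable (h j) μ := fun j =>
    my_integrable_of_bound _ (hmeas_h j) 1 (habsh j)
  have intS : ∀ j, Integrable (s j) μ := fun j =>
    my_integrable_of_bound _ (hmeas_s j) 1 (habss j)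
  have intHS : ∀ j, Integrable (fun ω => h j ω * s j ω) μ := fun j =>
    my_integrable_of_bound _ ((hmeas_h j).mul (hmeas_s j)) 1 (habs1 j)
  have intHSS : ∀ j j', Integrable (fun ω => (h j ω * s j ω) * (h j' ω * s j' ω)) μ := by
    intro j j'
    refine my_integrable_of_bound _ (((hmeas_h j).mul (hmeas_s j)).mul
      ((hmeas_h j').mul (hmeas_s j'))) 1 fun ω => ?_
    rw [abs_mul]
    exact mul_le_one₀ (habs1 j ω) (abs_nonneg _) (habs1 j' ω)
  have intHHSS : ∀ j j',
      Integrable (fun ω => h i ω * ((h j ω * s j ω) * (h j' ω * s j' ω))) μ := by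
    intro j j'
    refine my_integrable_of_bound _ ((hmeas_h i).mul (((hmeas_h j).mul (hmeas_s j)).mul
      ((hmeas_h j').mul (hmeas_s j')))) 1 fun ω => ?_
    rw [abs_mul, abs_mul]
    exact mul_le_one₀ (habsh i ω) (by positivity)
      (mul_le_one₀ (habs1 j ω) (abs_nonneg _) (habs1 j' ω))
  -- expectations of single variables
  have hEh : ∀ j, ∫ ω, h j ω ∂μ = (b:ℝ)⁻¹ := by
    intro j
    have hpt : (fun ω => h j ω) = Set.indicator {ω | h j ω = 1} (fun _ => (1:ℝ)) := by
      funext ω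
      rcases hval_h j ω with e | e
      · rw [Set.indicator_of_notMem (by simp [Set.mem_setOf_eq, e])]
        exact e
      · rw [Set.indicator_of_mem (by simp [Set.mem_setOf_eq, e])]
        exact e
    rw [hpt, integral_indicator_const _ (mH j), measureReal_def, hprob_h j]
    simp [ENNReal.toReal_inv]
  have hEs : ∀ j, ∫ ω, s j ω ∂μ = 0 := by
    intro j
    have hpt : (fun ω => s j ω) =
        fun ω => 2 * Set.indicator {ω | s j ω = 1} (fun _ => (1:ℝ)) ω - 1 := by
      funext ω
      rcases hval_s j ω with e | e
      · rw [Set.indicator_of_mem (by simp [Set.mem_setOf_eq, e])]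
        rw [e]; norm_num
      · rw [Set.indicator_of_notMem (by norm_num [Set.mem_setOf_eq, e])]
        rw [e]; norm_num
    rw [hpt, integral_sub (((integrable_const (1:ℝ)).indicator (mS j)).const_mul 2)
      (integrable_const 1)]
    rw [integral_const_mul, integral_indicator_const _ (mS j), measureReal_def, hprob_s j, integral_const]
    simp
  have hEmu : ∀ j, ∫ ω, h j ω * s j ω ∂μ = 0 := by
    intro j
    have hind : IndepFun (h j) (s j) μ :=
      hindep.indepFun (show (Sum.inl j : Fin n ⊕ Fin n) ≠ Sum.inr j by simp)
    have e : ∫ ω, h j ω * s j ω ∂μ = (∫ ω, h j ω ∂μ) * ∫ ω, s j ω ∂μ :=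
      hind.integral_fun_mul_eq_mul_integral (intH j).1 (intS j).1
    rw [e, hEs, mul_zero]
  have hEmumu : ∀ j j', j ≠ j' →
      ∫ ω, (h j ω * s j ω) * (h j' ω * s j' ω) ∂μ = 0 := by
    intro j j' hjj'
    have hind : IndepFun (fun ω => h j ω * s j ω) (fun ω => h j' ω * s j' ω) μ := by
      have := hindep.indepFun_mul_mul hmf (Sum.inl j) (Sum.inr j) (Sum.inl j') (Sum.inr j')
        (by simp [hjj']) (by simp) (by simp) (by simp [hjj'])
      exact this
    have e : ∫ ω, (h j ω * s j ω) * (h j' ω * s j' ω) ∂μ =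
        (∫ ω, h j ω * s j ω ∂μ) * ∫ ω, h j' ω * s j' ω ∂μ :=
      hind.integral_fun_mul_eq_mul_integral (intHS j).1 (intHS j').1
    rw [e, hEmu, zero_mul]
  have hEdiag : ∀ j, j ≠ i →
      ∫ ω, h i ω * ((h j ω * s j ω) * (h j ω * s j ω)) ∂μ = (b:ℝ)⁻¹ * (b:ℝ)⁻¹ := by
    intro j hj
    have hpt : (fun ω => h i ω * ((h j ω * s j ω) * (h j ω * s j ω))) =
        fun ω => h i ω * h j ω := by
      funext ω
      rcases hval_h j ω with e | e <;> rcases hval_s j ω with e' | e' <;>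
        rw [e, e'] <;> ring
    rw [hpt]
    have hind : IndepFun (h i) (h j) μ :=
      hindep.indepFun (show (Sum.inl i : Fin n ⊕ Fin n) ≠ Sum.inl j by simp [Ne.symm hj])
    have e : ∫ ω, h i ω * h j ω ∂μ = (∫ ω, h i ω ∂μ) * ∫ ω, h j ω ∂μ :=
      hind.integral_fun_mul_eq_mul_integral (intH i).1 (intH j).1
    rw [e, hEh i, hEh j]
  have hEoff : ∀ j j', j ≠ i → j' ≠ i → j ≠ j' →
      ∫ ω, h i ω * ((h j ω * s j ω) * (h j' ω * s j' ω)) ∂μ = 0 := by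
    intro j j' hj hj' hjj'
    have hind : IndepFun (h i) (fun ω => (h j ω * s j ω) * (h j' ω * s j' ω)) μ := by
      have hdisj : Disjoint ({Sum.inl i} : Finset (Fin n ⊕ Fin n))
          ({Sum.inl j, Sum.inr j, Sum.inl j', Sum.inr j'} : Finset (Fin n ⊕ Fin n)) := by
        simp only [Finset.disjoint_left, Finset.mem_singleton, Finset.mem_insert]
        rintro a rfl
        simp [Ne.symm hj, Ne.symm hj']
      have := my_indep_comp hindep hmf _ _ hdisj
        (fun p => p ⟨Sum.inl i, by simp⟩)
        (fun p => (p ⟨Sum.inl j, by simp⟩ * p ⟨Sum.inr j, by simp⟩) *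
          (p ⟨Sum.inl j', by simp⟩ * p ⟨Sum.inr j', by simp⟩))
        (by fun_prop) (by fun_prop)
      exact this
    have e : ∫ ω, h i ω * ((h j ω * s j ω) * (h j' ω * s j' ω)) ∂μ =
        (∫ ω, h i ω ∂μ) * ∫ ω, (h j ω * s j ω) * (h j' ω * s j' ω) ∂μ :=
      hind.integral_fun_mul_eq_mul_integral (intH i).1 (intHSS j j').1
    rw [e, hEmumu j j' hjj', mul_zero]
  -- tail norm minimizer
  obtain ⟨S, hScard, hSval⟩ : ∃ S : Finset (Fin n), S.card = min k n ∧
      tailNorm v k = Real.sqrt (∑ j ∈ Sᶜ, v j ^ 2) := by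
    have hne : {x : ℝ | ∃ S : Finset (Fin n), S.card = min k n ∧
        x = Real.sqrt (∑ j ∈ Sᶜ, v j ^ 2)}.Nonempty := by
      obtain ⟨S, -, hS⟩ := Finset.exists_subset_card_eq (s := (Finset.univ : Finset (Fin n)))
        (n := min k n) (by simp [Finset.card_univ])
      exact ⟨_, S, hS, rfl⟩
    have hfin : {x : ℝ | ∃ S : Finset (Fin n), S.card = min k n ∧
        x = Real.sqrt (∑ j ∈ Sᶜ, v j ^ 2)}.Finite := by
      apply Set.Finite.subset (Set.finite_range
        (fun S : Finset (Fin n) => Real.sqrt (∑ j ∈ Sᶜ, v j ^ 2)))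
      rintro x ⟨S, -, rfl⟩
      exact ⟨S, rfl⟩
    exact hne.csInf_mem hfin
  have htail2 : tailNorm v k ^ 2 = ∑ j ∈ Sᶜ, v j ^ 2 := by
    rw [hSval, Real.sq_sqrt (by positivity)]
  have hvipos : 0 < v i ^ 2 :=
    lt_of_le_of_lt (by positivity) hheavy
  have htailk : ∑ j ∈ Sᶜ, v j ^ 2 < k * v i ^ 2 := by
    have hkk : (k:ℝ) * (1/k) = 1 := by field_simp
    rw [← htail2]
    nlinarith [mul_lt_mul_of_pos_left hheavy hk']
  set T : Finset (Fin n) := S.erase i with hT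
  set R : Finset (Fin n) := Sᶜ.erase i with hR
  have hTk : (T.card : ℝ) ≤ k := by
    have h1 : T.card ≤ S.card := Finset.card_le_card (Finset.erase_subset i S)
    have h2 : S.card ≤ k := by rw [hScard]; exact min_le_left k n
    exact_mod_cast h1.trans h2
  set Y : Ω → ℝ := fun ω => ∑ j ∈ R, (h j ω * s j ω) * v j with hYdef
  have hYmeas : Measurable Y :=
    Finset.measurable_sum _ fun j _ => ((hmeas_h j).mul (hmeas_s j)).mul measurable_const
  set E1 : Set Ω := ⋃ j ∈ T, {ω | h j ω = 1} with hE1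
  have mE1 : MeasurableSet E1 := T.measurableSet_biUnion fun j _ => mH j
  set G : Set Ω := {ω | v i ^ 2 ≤ Y ω ^ 2} with hG
  have mG : MeasurableSet G := measurableSet_le measurable_const (hYmeas.pow_const 2)
  set B : Set Ω := {ω | 0 <
      (∑ j, (h j ω * s j ω) * v j) * (h i ω * s i ω) * Real.sign (v i)} with hB
  have mB : MeasurableSet B := by
    have hc : Measurable (fun ω => ∑ j, (h j ω * s j ω) * v j) :=
      Finset.measurable_sum _ fun j _ => ((hmeas_h j).mul (hmeas_s j)).mul measurable_const
    exact measurableSet_lt measurable_const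
      ((hc.mul ((hmeas_h i).mul (hmeas_s i))).mul measurable_const)
  -- pointwise inclusion
  have hsub : A ∩ Bᶜ ⊆ (A ∩ E1) ∪ (A ∩ G) := by
    rintro ω ⟨hωA, hωB⟩
    by_cases hE : ω ∈ E1
    · exact Or.inl ⟨hωA, hE⟩
    by_cases hGm : ω ∈ G
    · exact Or.inr ⟨hωA, hGm⟩
    exfalso
    apply hωB
    have hhi : h i ω = 1 := hωA
    have hT0 : ∀ j ∈ T, h j ω = 0 := by
      intro j hj
      rcases hval_h j ω with e | e
      · exact e
      · exact absurd (Set.mem_biUnion hj e) hE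
    have hYlt : Y ω ^ 2 < v i ^ 2 := lt_of_not_ge hGm
    have hUe : Finset.univ.erase i = T ∪ R := by
      ext j
      simp only [Finset.mem_erase, Finset.mem_univ, and_true, Finset.mem_union, hT, hR,
        Finset.mem_compl]
      by_cases hjS : j ∈ S <;> simp [hjS]
    have hdisjTR : Disjoint T R := by
      refine Finset.disjoint_left.mpr fun a ha ha' => ?_
      exact (Finset.mem_compl.mp (Finset.mem_of_mem_erase ha')) (Finset.mem_of_mem_erase ha)
    have hsplit : ∑ j, (h j ω * s j ω) * v j = s i ω * v i + Y ω := by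
      rw [← Finset.add_sum_erase _ _ (Finset.mem_univ i), hUe, Finset.sum_union hdisjTR,
        Finset.sum_eq_zero (fun j hj => by rw [hT0 j hj]; ring), zero_add, hhi, one_mul]
    show ω ∈ B
    simp only [hB, Set.mem_setOf_eq]
    rw [hsplit, hhi, one_mul]
    have hvine : v i ≠ 0 := fun e => by simp [e] at hvipos
    have habsY : |Y ω| < |v i| := by
      have := Real.sqrt_lt_sqrt (sq_nonneg (Y ω)) hYlt
      rwa [Real.sqrt_sq_eq_abs, Real.sqrt_sq_eq_abs] at this
    have hY1 : Y ω ≤ |Y ω| := le_abs_self _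
    have hY2 : -|Y ω| ≤ Y ω := neg_abs_le _
    rcases hval_s i ω with e | e <;> rcases hvine.lt_or_gt with hv | hv
    · rw [e, Real.sign_of_neg hv]
      rw [abs_of_neg hv] at habsY
      nlinarith
    · rw [e, Real.sign_of_pos hv]
      rw [abs_of_pos hv] at habsY
      nlinarith
    · rw [e, Real.sign_of_neg hv]
      rw [abs_of_neg hv] at habsY
      nlinarith
    · rw [e, Real.sign_of_pos hv]
      rw [abs_of_pos hv] at habsY
      nlinarith
  -- bound 1: heavy collisions
  have h1 : μ (A ∩ E1) ≤ (k : ℝ≥0∞) * ((b:ℝ≥0∞)⁻¹ * (b:ℝ≥0∞)⁻¹) := by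
    have hAE : A ∩ E1 = ⋃ j ∈ T, (A ∩ {ω | h j ω = 1}) := by
      rw [hE1, Set.inter_iUnion₂]
    rw [hAE]
    refine le_trans (measure_biUnion_finset_le T _) ?_
    have heach : ∀ j ∈ T, μ (A ∩ {ω | h j ω = 1}) = (b:ℝ≥0∞)⁻¹ * (b:ℝ≥0∞)⁻¹ := by
      intro j hj
      have hji : j ≠ i := (Finset.mem_erase.mp hj).1
      have hind : IndepFun (h i) (h j) μ :=
        hindep.indepFun (show (Sum.inl i : Fin n ⊕ Fin n) ≠ Sum.inl j by simp [Ne.symm hji])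
      have he := hind.measure_inter_preimage_eq_mul {1} {1}
        (measurableSet_singleton 1) (measurableSet_singleton 1)
      have e1 : h i ⁻¹' {1} = A := rfl
      have e2 : h j ⁻¹' {1} = {ω | h j ω = 1} := rfl
      rw [e1, e2] at he
      rw [he, hprob_h i, hprob_h j]
    rw [Finset.sum_congr rfl heach, Finset.sum_const, nsmul_eq_mul]
    refine mul_le_mul_left ?_ _
    exact_mod_cast Nat.cast_le.mpr (by exact_mod_cast hTk : T.card ≤ k)
  -- bound 2: Markov / second moment
  have hWpt : (fun ω => h i ω * Y ω ^ 2) = fun ω => ∑ j ∈ R, ∑ j' ∈ R,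
      (v j * v j') * (h i ω * ((h j ω * s j ω) * (h j' ω * s j' ω))) := by
    funext ω
    rw [hYdef, sq, Finset.sum_mul_sum]
    simp only [Finset.mul_sum]
    exact Finset.sum_congr rfl fun j _ => Finset.sum_congr rfl fun j' _ => by ring
  have hintW : Integrable (fun ω => h i ω * Y ω ^ 2) μ := by
    rw [hWpt]
    exact integrable_finset_sum _ fun j _ => integrable_finset_sum _ fun j' _ =>
      ((intHHSS j j').const_mul _)
  have hEW : ∫ ω, h i ω * Y ω ^ 2 ∂μ = (∑ j ∈ R, v j ^ 2) * ((b:ℝ)⁻¹ * (b:ℝ)⁻¹) := by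
    rw [hWpt]
    rw [integral_finset_sum _ fun j _ => integrable_finset_sum _ fun j' _ =>
      ((intHHSS j j').const_mul _)]
    have hterm : ∀ j ∈ R, ∫ ω, (∑ j' ∈ R,
        (v j * v j') * (h i ω * ((h j ω * s j ω) * (h j' ω * s j' ω)))) ∂μ =
        v j ^ 2 * ((b:ℝ)⁻¹ * (b:ℝ)⁻¹) := by
      intro j hj
      have hji : j ≠ i := (Finset.mem_erase.mp hj).1
      rw [integral_finset_sum _ fun j' _ => ((intHHSS j j').const_mul _)]
      rw [Finset.sum_eq_single_of_mem j hj]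
      · rw [integral_const_mul, hEdiag j hji]
        ring
      · intro j' hj' hjj'
        have hj'i : j' ≠ i := (Finset.mem_erase.mp hj').1
        rw [integral_const_mul, hEoff j j' hji hj'i (Ne.symm hjj'), mul_zero]
    rw [Finset.sum_congr rfl hterm, ← Finset.sum_mul]
  have hMark : (μ (A ∩ G)).toReal * v i ^ 2 ≤ (∑ j ∈ R, v j ^ 2) * ((b:ℝ)⁻¹ * (b:ℝ)⁻¹) := by
    have hle : ∀ ω, Set.indicator (A ∩ G) (fun _ => v i ^ 2) ω ≤ h i ω * Y ω ^ 2 := by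
      intro ω
      by_cases hω : ω ∈ A ∩ G
      · rw [Set.indicator_of_mem hω]
        have e1 : h i ω = 1 := hω.1
        have e2 : v i ^ 2 ≤ Y ω ^ 2 := hω.2
        rw [e1, one_mul]
        exact e2
      · rw [Set.indicator_of_notMem hω]
        rcases hval_h i ω with e | e <;> rw [e] <;> nlinarith [sq_nonneg (Y ω)]
    calc (μ (A ∩ G)).toReal * v i ^ 2
        = ∫ ω, Set.indicator (A ∩ G) (fun _ => v i ^ 2) ω ∂μ := by
          rw [integral_indicator_const _ (mA.inter mG), smul_eq_mul, measureReal_def]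
      _ ≤ ∫ ω, h i ω * Y ω ^ 2 ∂μ :=
          integral_mono ((integrable_const _).indicator (mA.inter mG)) hintW hle
      _ = _ := hEW
  have hsumR : ∑ j ∈ R, v j ^ 2 ≤ ∑ j ∈ Sᶜ, v j ^ 2 :=
    Finset.sum_le_sum_of_subset_of_nonneg (Finset.erase_subset i Sᶜ) fun j _ _ => sq_nonneg _
  have h2' : (μ (A ∩ G)).toReal ≤ k * ((b:ℝ)⁻¹ * (b:ℝ)⁻¹) := by
    have hb2 : 0 < (b:ℝ)⁻¹ * (b:ℝ)⁻¹ := by positivity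
    have hc : (μ (A ∩ G)).toReal * v i ^ 2 ≤ ((k:ℝ) * ((b:ℝ)⁻¹ * (b:ℝ)⁻¹)) * v i ^ 2 := by
      nlinarith
    exact le_of_mul_le_mul_right hc hvipos
  have h2 : μ (A ∩ G) ≤ (k : ℝ≥0∞) * ((b:ℝ≥0∞)⁻¹ * (b:ℝ≥0∞)⁻¹) := by
    have hfin : (k : ℝ≥0∞) * ((b:ℝ≥0∞)⁻¹ * (b:ℝ≥0∞)⁻¹) ≠ ∞ :=
      ENNReal.mul_ne_top (ENNReal.natCast_ne_top k)
        (ENNReal.mul_ne_top (ENNReal.inv_ne_top.mpr hb0) (ENNReal.inv_ne_top.mpr hb0))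
    rw [← ENNReal.toReal_le_toReal (measure_ne_top μ _) hfin]
    simpa [ENNReal.toReal_mul, ENNReal.toReal_inv] using h2'
  -- assemble
  have h3 : μ (A ∩ Bᶜ) ≤ 2 * k * ((b:ℝ≥0∞)⁻¹ * (b:ℝ≥0∞)⁻¹) := by
    calc μ (A ∩ Bᶜ) ≤ μ ((A ∩ E1) ∪ (A ∩ G)) := measure_mono hsub
      _ ≤ μ (A ∩ E1) + μ (A ∩ G) := measure_union_le _ _
      _ ≤ (k : ℝ≥0∞) * ((b:ℝ≥0∞)⁻¹ * (b:ℝ≥0∞)⁻¹)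
          + (k : ℝ≥0∞) * ((b:ℝ≥0∞)⁻¹ * (b:ℝ≥0∞)⁻¹) := add_le_add h1 h2
      _ = 2 * k * ((b:ℝ≥0∞)⁻¹ * (b:ℝ≥0∞)⁻¹) := by ring
  have h4 : (b:ℝ≥0∞)⁻¹ ≤ μ (A ∩ B) + 2 * k * ((b:ℝ≥0∞)⁻¹ * (b:ℝ≥0∞)⁻¹) := by
    calc (b:ℝ≥0∞)⁻¹ = μ A := (hprob_h i).symm
      _ = μ (A ∩ B) + μ (A \ B) := (measure_inter_add_diff A mB).symm
      _ = μ (A ∩ B) + μ (A ∩ Bᶜ) := by rw [Set.diff_eq]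
      _ ≤ _ := add_le_add le_rfl h3
  have hbr : (b:ℝ) = 900 * k := by rw [hbk]; push_cast; ring
  have harith : (399:ℝ≥0∞)/400 * (b:ℝ≥0∞)⁻¹ + 2 * k * ((b:ℝ≥0∞)⁻¹ * (b:ℝ≥0∞)⁻¹)
      ≤ (b:ℝ≥0∞)⁻¹ := by
    have hfin1 : (399:ℝ≥0∞)/400 * (b:ℝ≥0∞)⁻¹ + 2 * k * ((b:ℝ≥0∞)⁻¹ * (b:ℝ≥0∞)⁻¹) ≠ ∞ := by
      refine ENNReal.add_ne_top.mpr ⟨?_, ?_⟩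
      · exact ENNReal.mul_ne_top h399 (ENNReal.inv_ne_top.mpr hb0)
      · exact ENNReal.mul_ne_top (ENNReal.mul_ne_top (by norm_num) (ENNReal.natCast_ne_top k))
          (ENNReal.mul_ne_top (ENNReal.inv_ne_top.mpr hb0) (ENNReal.inv_ne_top.mpr hb0))
    rw [← ENNReal.toReal_le_toReal hfin1 (ENNReal.inv_ne_top.mpr hb0)]
    have e1 : ((399:ℝ≥0∞)/400 * (b:ℝ≥0∞)⁻¹ + 2 * k * ((b:ℝ≥0∞)⁻¹ * (b:ℝ≥0∞)⁻¹)).toReal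
        = 399/400 * (b:ℝ)⁻¹ + 2 * k * ((b:ℝ)⁻¹ * (b:ℝ)⁻¹) := by
      rw [ENNReal.toReal_add (ENNReal.mul_ne_top h399 (ENNReal.inv_ne_top.mpr hb0))
        (ENNReal.mul_ne_top (ENNReal.mul_ne_top (by norm_num) (ENNReal.natCast_ne_top k))
          (ENNReal.mul_ne_top (ENNReal.inv_ne_top.mpr hb0) (ENNReal.inv_ne_top.mpr hb0)))]
      simp [ENNReal.toReal_mul, ENNReal.toReal_inv, ENNReal.toReal_div]
    rw [e1, ENNReal.toReal_inv]
    simp only [ENNReal.toReal_natCast]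
    have hkne : (k:ℝ) ≠ 0 := ne_of_gt hk'
    have hkbi : (k:ℝ) * (b:ℝ)⁻¹ = 1/900 := by
      rw [hbr]
      field_simp
    have e2 : 2 * (k:ℝ) * ((b:ℝ)⁻¹ * (b:ℝ)⁻¹) = 1/450 * (b:ℝ)⁻¹ := by
      have e3 : 2 * (k:ℝ) * ((b:ℝ)⁻¹ * (b:ℝ)⁻¹) = 2 * ((k:ℝ) * (b:ℝ)⁻¹) * (b:ℝ)⁻¹ := by ring
      rw [e3, hkbi]
      ring
    rw [e2]
    have hu : (0:ℝ) ≤ (b:ℝ)⁻¹ := inv_nonneg.mpr hbpos.le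
    linarith
  have h5 : (399:ℝ≥0∞)/400 * (b:ℝ≥0∞)⁻¹ ≤ μ (A ∩ B) := by
    have hc : 2 * (k:ℝ≥0∞) * ((b:ℝ≥0∞)⁻¹ * (b:ℝ≥0∞)⁻¹) ≠ ∞ :=
      ENNReal.mul_ne_top (ENNReal.mul_ne_top (by norm_num) (ENNReal.natCast_ne_top k))
        (ENNReal.mul_ne_top (ENNReal.inv_ne_top.mpr hb0) (ENNReal.inv_ne_top.mpr hb0))
    exact (ENNReal.add_le_add_iff_right hc).mp (harith.trans h4)
  rw [hAeq, cond_apply mA, hprob_h i, inv_inv]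
  calc (399:ℝ≥0∞)/400 = (b:ℝ≥0∞) * ((399:ℝ≥0∞)/400 * (b:ℝ≥0∞)⁻¹) := by
        rw [mul_comm, mul_assoc, ENNReal.inv_mul_cancel hb0 hbtop, mul_one]
    _ ≤ (b:ℝ≥0∞) * μ (A ∩ B) := mul_le_mul_right h5 _
end

section
/- In the random bucket model, the set of suspect keys is small: the set { i ∈ [n] : P[c·μ_i > 0 | μ_i ≠ 0] > 59/60 or P[c·μ_i < 0 | μ_i ≠ 0] > 59/60 } has cardinality at most 51·b. -/
open MeasureTheory ProbabilityTheory
open scoped ENNReal BigOperators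

lemma indep_coord_update {Ω ι : Type*} [MeasurableSpace Ω] [Fintype ι] [DecidableEq ι]
    (μ : Measure Ω) (f : ι → Ω → ℝ) (hf : ∀ i, Measurable (f i))
    (hindep : iIndepFun f μ) (k₀ : ι)
    {A : Set ℝ} (hA : MeasurableSet A) {M : Set (ι → ℝ)} (hM : MeasurableSet M) :
    μ ((f k₀) ⁻¹' A ∩ (fun ω => Function.update (fun k => f k ω) k₀ 0) ⁻¹' M)
      = μ ((f k₀) ⁻¹' A) * μ ((fun ω => Function.update (fun k => f k ω) k₀ 0) ⁻¹' M) := by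
  classical
  have hdisj : Disjoint ({k₀} : Finset ι) ({k₀}ᶜ : Finset ι) := by
    simp [Finset.disjoint_left]
  have hIF := hindep.indepFun_finset {k₀} {k₀}ᶜ hdisj hf
  have he : Measurable (fun y : (({k₀} : Finset ι) → ℝ) => y ⟨k₀, by simp⟩) :=
    measurable_pi_apply _
  have hψ : Measurable (fun y : ((({k₀}ᶜ : Finset ι)) → ℝ) => (fun k : ι =>
      if hk : k ∈ ({k₀}ᶜ : Finset ι) then y ⟨k, hk⟩ else 0)) := by
    apply measurable_pi_lambda
    intro k
    by_cases hk : k ∈ ({k₀}ᶜ : Finset ι)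
    · simpa [hk] using measurable_pi_apply (⟨k, hk⟩ : (({k₀}ᶜ : Finset ι) : Type _))
    · simp [hk]
  have hcomp := hIF.comp he hψ
  have h1 : (fun ω => (fun y : (({k₀} : Finset ι) → ℝ) => y ⟨k₀, by simp⟩)
      ((fun a (i : ({k₀} : Finset ι)) => f i a) ω)) = f k₀ := rfl
  have h2 : (fun ω => (fun y : ((({k₀}ᶜ : Finset ι)) → ℝ) => (fun k : ι =>
      if hk : k ∈ ({k₀}ᶜ : Finset ι) then y ⟨k, hk⟩ else 0))
      ((fun a (i : (({k₀}ᶜ : Finset ι))) => f i a) ω))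
      = fun ω => Function.update (fun k => f k ω) k₀ 0 := by
    funext ω
    funext k
    by_cases hk : k = k₀
    · subst hk; simp
    · simp [Function.update_apply, hk, Finset.mem_compl, Finset.mem_singleton]
  simp only [Function.comp_def] at hcomp
  rw [h1, h2] at hcomp
  exact hcomp.measure_inter_preimage_eq_mul A M hA hM

/-- The set of suspect keys is small: the set of keys `i` whose conditional
sign-alignment probability (in either direction) exceeds `59/60` has
cardinality at most `51·b`. -/
theorem suspect_set_small
    {Ω : Type*} [MeasurableSpace Ω] (μ : Measure Ω) [IsProbabilityMeasure μ]
    (n b : ℕ) (hn : 0 < n) (hb : 0 < b)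
    (h s : Fin n → Ω → ℝ)
    (hmeas_h : ∀ j, Measurable (h j)) (hmeas_s : ∀ j, Measurable (s j))
    (hval_h : ∀ j ω, h j ω = 0 ∨ h j ω = 1)
    (hval_s : ∀ j ω, s j ω = 1 ∨ s j ω = -1)
    (hprob_h : ∀ j, μ {ω | h j ω = 1} = (b : ℝ≥0∞)⁻¹)
    (hprob_s : ∀ j, μ {ω | s j ω = 1} = 1 / 2)
    (hindep : iIndepFun (Sum.elim h s) μ)
    (v : Fin n → ℝ) :
    Set.ncard {i : Fin n |
        (59 : ℝ≥0∞) / 60 <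
          μ[|{ω | h i ω * s i ω ≠ 0}]
            {ω | 0 < (∑ j, (h j ω * s j ω) * v j) * (h i ω * s i ω)} ∨
        (59 : ℝ≥0∞) / 60 <
          μ[|{ω | h i ω * s i ω ≠ 0}]
            {ω | (∑ j, (h j ω * s j ω) * v j) * (h i ω * s i ω) < 0}}
      ≤ 51 * b := by
  classical
  by_contra hcon
  push_neg at hcon
  set F : (Fin n ⊕ Fin n) → Ω → ℝ := Sum.elim h s with hF
  have hFmeas : ∀ k, Measurable (F k) := by
    rintro (j|j)
    · exact hmeas_h j
    · exact hmeas_s j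
  -- basic numeric facts
  have hbne : ((b:ℕ):ℝ≥0∞) ≠ 0 := by
    exact_mod_cast Nat.cast_ne_zero.mpr hb.ne'
  have hbtop : ((b:ℕ):ℝ≥0∞) ≠ ⊤ := ENNReal.natCast_ne_top b
  have hbb : ((b:ℕ):ℝ≥0∞) * ((b:ℕ):ℝ≥0∞)⁻¹ = 1 := ENNReal.mul_inv_cancel hbne hbtop
  have hs_ne : ∀ j ω, s j ω ≠ 0 := by
    intro j ω; rcases hval_s j ω with h'|h' <;> rw [h'] <;> norm_num
  have hmeasH1 : ∀ j, MeasurableSet {ω | h j ω = 1} := by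
    intro j
    exact (hmeas_h j) (measurableSet_singleton 1)
  have hmeasS : ∀ j (a : ℝ), MeasurableSet {ω | s j ω = a} := by
    intro j a
    exact (hmeas_s j) (measurableSet_singleton a)
  have hμs_neg : ∀ j, μ {ω | s j ω = -1} = 1/2 := by
    intro j
    have hcompl : {ω | s j ω = -1} = {ω | s j ω = 1}ᶜ := by
      ext ω; rcases hval_s j ω with h'|h' <;> simp [h'] <;> norm_num
    rw [hcompl, prob_compl_eq_one_sub (hmeasS j 1), hprob_s j]
    rw [ENNReal.sub_half ENNReal.one_ne_top]
  -- the suspect finset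
  set Tset : Set (Fin n) := {i : Fin n |
        (59 : ℝ≥0∞) / 60 <
          μ[|{ω | h i ω * s i ω ≠ 0}]
            {ω | 0 < (∑ j, (h j ω * s j ω) * v j) * (h i ω * s i ω)} ∨
        (59 : ℝ≥0∞) / 60 <
          μ[|{ω | h i ω * s i ω ≠ 0}]
            {ω | (∑ j, (h j ω * s j ω) * v j) * (h i ω * s i ω) < 0}} with hTset
  set TF : Finset (Fin n) := Tset.toFinset with hTF
  have hcard : 51 * b < TF.card := by
    rwa [← Set.ncard_eq_toFinset_card' Tset]
  have hTFne : TF.Nonempty := by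
    rw [← Finset.card_pos]; omega
  obtain ⟨i0, hi0T, hi0min⟩ := TF.exists_min_image (fun i => |v i|) hTFne
  set t : ℝ := |v i0| with ht
  set c' : Ω → ℝ := fun ω => ∑ j ∈ Finset.univ.erase i0, (h j ω * s j ω) * v j with hc'
  have hc'meas : Measurable c' := by
    apply Finset.measurable_sum
    intro j _
    exact ((hmeas_h j).mul (hmeas_s j)).mul measurable_const
  set X : Set Ω := {ω | t ≤ |c' ω|} with hX
  have hXmeas : MeasurableSet X :=
    measurableSet_le measurable_const hc'meas.abs
  -- the update sum identity
  have hsum_upd : ∀ (k₀ : Fin n ⊕ Fin n) (E : Finset (Fin n)) (ω : Ω),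
      (∀ k ∈ E, Sum.inl k ≠ k₀ ∧ Sum.inr k ≠ k₀) →
      (∑ k ∈ E, Function.update (fun k' => F k' ω) k₀ 0 (Sum.inl k) *
        Function.update (fun k' => F k' ω) k₀ 0 (Sum.inr k) * v k)
        = ∑ k ∈ E, (h k ω * s k ω) * v k := by
    intro k₀ E ω hcond
    refine Finset.sum_congr rfl (fun k hk => ?_)
    obtain ⟨h1, h2⟩ := hcond k hk
    rw [Function.update_of_ne h1, Function.update_of_ne h2]
    rfl
  -- tuple-space sum function
  set sumfun : ((Fin n ⊕ Fin n) → ℝ) → ℝ :=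
    fun x => ∑ k ∈ Finset.univ.erase i0, x (Sum.inl k) * x (Sum.inr k) * v k with hsumfun
  have hpia : ∀ k : Fin n ⊕ Fin n, Measurable (fun x : (Fin n ⊕ Fin n) → ℝ => x k) :=
    fun k => measurable_pi_apply k
  have hsumfun_meas : Measurable sumfun := by
    apply Finset.measurable_sum
    intro k _
    exact ((hpia (Sum.inl k)).mul (hpia (Sum.inr k))).mul measurable_const
  set Hset : Set Ω := {ω | h i0 ω = 1} with hHset
  have hHsetmeas : MeasurableSet Hset := hmeasH1 i0
  have hμH : μ Hset = ((b:ℕ):ℝ≥0∞)⁻¹ := hprob_h i0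
  have peel := fun (k₀ : Fin n ⊕ Fin n) {A : Set ℝ} (hA : MeasurableSet A)
      {M : Set ((Fin n ⊕ Fin n) → ℝ)} (hM : MeasurableSet M) =>
    indep_coord_update μ F hFmeas hindep k₀ hA hM
  have hHG : ∀ (P : ℝ → Prop), MeasurableSet {z : ℝ | P z} →
      μ (Hset ∩ {ω | P (c' ω)}) = ((b:ℕ):ℝ≥0∞)⁻¹ * μ {ω | P (c' ω)} := by
    intro P hP
    have hM : MeasurableSet (sumfun ⁻¹' {z | P z}) := hsumfun_meas hP
    have key := peel (Sum.inl i0) (measurableSet_singleton (1:ℝ)) hM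
    have h1 : (F (Sum.inl i0)) ⁻¹' {(1:ℝ)} = Hset := by
      ext ω; simp [hF, hHset]
    have h2 : (fun ω => Function.update (fun k => F k ω) (Sum.inl i0) 0) ⁻¹' (sumfun ⁻¹' {z | P z})
        = {ω | P (c' ω)} := by
      ext ω
      simp only [Set.mem_preimage, Set.mem_setOf_eq, hsumfun]
      rw [hsum_upd (Sum.inl i0) _ ω (fun k hk =>
        ⟨fun hc => (Finset.mem_erase.mp hk).1 (Sum.inl.inj hc), Sum.inr_ne_inl⟩)]
    rw [h1, h2] at key
    rw [key, hμH]
  have hSH : ∀ (a : ℝ) (P : ℝ → Prop), MeasurableSet {z : ℝ | P z} →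
      μ ({ω | s i0 ω = a} ∩ (Hset ∩ {ω | P (c' ω)}))
        = μ {ω | s i0 ω = a} * (((b:ℕ):ℝ≥0∞)⁻¹ * μ {ω | P (c' ω)}) := by
    intro a P hP
    have hM : MeasurableSet ({x : (Fin n ⊕ Fin n) → ℝ | x (Sum.inl i0) = 1} ∩ sumfun ⁻¹' {z | P z}) :=
      ((hpia (Sum.inl i0)) (measurableSet_singleton (1:ℝ))).inter (hsumfun_meas hP)
    have key := peel (Sum.inr i0) (measurableSet_singleton a) hM
    have h1 : (F (Sum.inr i0)) ⁻¹' {a} = {ω | s i0 ω = a} := by ext ω; simp [hF]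
    have h2 : (fun ω => Function.update (fun k => F k ω) (Sum.inr i0) 0) ⁻¹'
        ({x : (Fin n ⊕ Fin n) → ℝ | x (Sum.inl i0) = 1} ∩ sumfun ⁻¹' {z | P z})
        = Hset ∩ {ω | P (c' ω)} := by
      ext ω
      simp only [Set.mem_preimage, Set.mem_inter_iff, Set.mem_setOf_eq, hsumfun, hHset]
      rw [Function.update_of_ne (by simp), hsum_upd (Sum.inr i0) _ ω (fun k hk =>
        ⟨Sum.inl_ne_inr, fun hc => (Finset.mem_erase.mp hk).1 (Sum.inr.inj hc)⟩)]
      simp only [hF, Sum.elim_inl]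
      rfl
    rw [h1, h2] at key
    rw [key, hHG P hP]
  have hcond_eval : ∀ (P₁ P₂ : ℝ → Prop) (Y : Set Ω),
      MeasurableSet {z : ℝ | P₁ z} → MeasurableSet {z : ℝ | P₂ z} →
      (Hset ∩ Y = ({ω | s i0 ω = 1} ∩ (Hset ∩ {ω | P₁ (c' ω)}))
        ∪ ({ω | s i0 ω = -1} ∩ (Hset ∩ {ω | P₂ (c' ω)}))) →
      μ[|Hset] Y = (2:ℝ≥0∞)⁻¹ * (μ {ω | P₁ (c' ω)} + μ {ω | P₂ (c' ω)}) := by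
    intro P₁ P₂ Y h1 h2 hsplit
    rw [cond_apply hHsetmeas, hsplit]
    have hdisj : Disjoint ({ω | s i0 ω = 1} ∩ (Hset ∩ {ω | P₁ (c' ω)}))
        ({ω | s i0 ω = -1} ∩ (Hset ∩ {ω | P₂ (c' ω)})) := by
      apply Set.disjoint_left.mpr
      rintro ω ⟨h1', _⟩ ⟨h2', _⟩
      simp only [Set.mem_setOf_eq] at h1' h2'
      rw [h1'] at h2'; norm_num at h2'
    have hm2 : MeasurableSet ({ω | s i0 ω = -1} ∩ (Hset ∩ {ω | P₂ (c' ω)})) :=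
      (hmeasS i0 (-1)).inter (hHsetmeas.inter (hc'meas h2))
    rw [measure_union hdisj hm2, hSH 1 P₁ h1, hSH (-1) P₂ h2, hprob_s i0, hμs_neg i0, hμH,
      inv_inv]
    simp only [one_div]
    rw [← mul_add ((2:ℝ≥0∞))⁻¹, ← mul_add (((b:ℕ):ℝ≥0∞))⁻¹, mul_left_comm ((2:ℝ≥0∞))⁻¹,
      ← mul_assoc, hbb, one_mul]
  have hfinish : ∀ (G₁ G₂ : Set Ω), MeasurableSet G₁ → MeasurableSet G₂ →
      X ⊆ G₁ᶜ ∪ G₂ᶜ → (59:ℝ≥0∞)/60 < (2:ℝ≥0∞)⁻¹ * (μ G₁ + μ G₂) →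
      (μ X).toReal < 1/30 := by
    intro G₁ G₂ hm1 hm2 hsub hlt
    have hr : (59:ℝ)/60 < 2⁻¹ * ((μ G₁).toReal + (μ G₂).toReal) := by
      have h1 : ((59:ℝ≥0∞)/60).toReal = 59/60 := by
        rw [ENNReal.toReal_div]; norm_num
      have h2 : ((2:ℝ≥0∞)⁻¹ * (μ G₁ + μ G₂)).toReal
          = 2⁻¹ * ((μ G₁).toReal + (μ G₂).toReal) := by
        rw [ENNReal.toReal_mul, ENNReal.toReal_add (measure_ne_top μ _) (measure_ne_top μ _)]
        norm_num
      rw [← h1, ← h2]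
      exact (ENNReal.toReal_lt_toReal (ENNReal.div_lt_top (by norm_num) (by norm_num)).ne
        (ENNReal.mul_ne_top (by norm_num)
          (ENNReal.add_ne_top.mpr ⟨measure_ne_top μ _, measure_ne_top μ _⟩))).mpr hlt
    have hXle : (μ X).toReal ≤ (μ G₁ᶜ).toReal + (μ G₂ᶜ).toReal := by
      have hle : μ X ≤ μ G₁ᶜ + μ G₂ᶜ := (measure_mono hsub).trans (measure_union_le _ _)
      calc (μ X).toReal ≤ (μ G₁ᶜ + μ G₂ᶜ).toReal :=
            ENNReal.toReal_mono (ENNReal.add_ne_top.mpr ⟨measure_ne_top μ _, measure_ne_top μ _⟩) hle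
        _ = _ := ENNReal.toReal_add (measure_ne_top μ _) (measure_ne_top μ _)
    have hc1 : (μ G₁ᶜ).toReal = 1 - (μ G₁).toReal := by
      rw [prob_compl_eq_one_sub hm1, ENNReal.toReal_sub_of_le prob_le_one ENNReal.one_ne_top]
      norm_num
    have hc2 : (μ G₂ᶜ).toReal = 1 - (μ G₂).toReal := by
      rw [prob_compl_eq_one_sub hm2, ENNReal.toReal_sub_of_le prob_le_one ENNReal.one_ne_top]
      norm_num
    rw [hc1, hc2] at hXle
    linarith
  -- the conditioning set is {h i0 = 1}
  have hcondset : {ω | h i0 ω * s i0 ω ≠ 0} = Hset := by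
    ext ω
    rcases hval_h i0 ω with h'|h' <;>
      simp [hHset, h', hs_ne i0 ω]
  have hdec : ∀ ω, (∑ j, (h j ω * s j ω) * v j) = (h i0 ω * s i0 ω) * v i0 + c' ω := by
    intro ω
    rw [hc']
    exact (Finset.add_sum_erase _ _ (Finset.mem_univ i0)).symm
  have hmemT : i0 ∈ Tset := Set.mem_toFinset.mp hi0T
  rw [hTset, Set.mem_setOf_eq, hcondset] at hmemT
  have hX30 : (μ X).toReal < 1/30 := by
    rcases hmemT with hgt | hlt
    · -- positive-alignment case
      have hsplit : Hset ∩ {ω | 0 < (∑ j, (h j ω * s j ω) * v j) * (h i0 ω * s i0 ω)}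
          = ({ω | s i0 ω = 1} ∩ (Hset ∩ {ω | 0 < c' ω + v i0}))
            ∪ ({ω | s i0 ω = -1} ∩ (Hset ∩ {ω | c' ω < v i0})) := by
        ext ω
        rcases hval_h i0 ω with h'|h'
        · simp [hHset, h']
        · rcases hval_s i0 ω with h''|h'' <;>
          · simp only [Set.mem_inter_iff, Set.mem_union, Set.mem_setOf_eq, hHset, h', h'', hdec ω]
            norm_num
            try (constructor <;> intro <;> linarith)
      have hm1 : MeasurableSet {z : ℝ | 0 < z + v i0} :=
        measurableSet_lt measurable_const (measurable_id.add_const _)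
      have hm2 : MeasurableSet {z : ℝ | z < v i0} :=
        measurableSet_lt measurable_id measurable_const
      have heval := hcond_eval (fun z => 0 < z + v i0) (fun z => z < v i0) _ hm1 hm2 hsplit
      rw [heval] at hgt
      refine hfinish {ω | 0 < c' ω + v i0} {ω | c' ω < v i0}
        (hc'meas hm1) (hc'meas hm2) ?_ hgt
      intro ω hω
      rw [hX, Set.mem_setOf_eq] at hω
      rcases le_abs.mp hω with h'|h'
      · right
        simp only [Set.mem_compl_iff, Set.mem_setOf_eq, not_lt]
        have h1 := le_abs_self (v i0)
        have h2 := neg_abs_le (v i0)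
        rw [ht] at h'
        linarith
      · left
        simp only [Set.mem_compl_iff, Set.mem_setOf_eq, not_lt]
        have h1 := le_abs_self (v i0)
        have h2 := neg_abs_le (v i0)
        rw [ht] at h'
        linarith
    · -- negative-alignment case
      have hsplit : Hset ∩ {ω | (∑ j, (h j ω * s j ω) * v j) * (h i0 ω * s i0 ω) < 0}
          = ({ω | s i0 ω = 1} ∩ (Hset ∩ {ω | c' ω + v i0 < 0}))
            ∪ ({ω | s i0 ω = -1} ∩ (Hset ∩ {ω | v i0 < c' ω})) := by
        ext ω
        rcases hval_h i0 ω with h'|h'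
        · simp [hHset, h']
        · rcases hval_s i0 ω with h''|h'' <;>
          · simp only [Set.mem_inter_iff, Set.mem_union, Set.mem_setOf_eq, hHset, h', h'', hdec ω]
            norm_num
            try (constructor <;> intro <;> linarith)
      have hm1 : MeasurableSet {z : ℝ | z + v i0 < 0} :=
        measurableSet_lt (measurable_id.add_const _) measurable_const
      have hm2 : MeasurableSet {z : ℝ | v i0 < z} :=
        measurableSet_lt measurable_const measurable_id
      have heval := hcond_eval (fun z => z + v i0 < 0) (fun z => v i0 < z) _ hm1 hm2 hsplit
      rw [heval] at hlt
      refine hfinish {ω | c' ω + v i0 < 0} {ω | v i0 < c' ω}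
        (hc'meas hm1) (hc'meas hm2) ?_ hlt
      intro ω hω
      rw [hX, Set.mem_setOf_eq] at hω
      rcases le_abs.mp hω with h'|h'
      · left
        simp only [Set.mem_compl_iff, Set.mem_setOf_eq, not_lt]
        have h1 := le_abs_self (v i0)
        have h2 := neg_abs_le (v i0)
        rw [ht] at h'
        linarith
      · right
        simp only [Set.mem_compl_iff, Set.mem_setOf_eq, not_lt]
        have h1 := le_abs_self (v i0)
        have h2 := neg_abs_le (v i0)
        rw [ht] at h'
        linarith
  -- Step B setup
  set T' : Finset (Fin n) := TF.erase i0 with hT'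
  have hmT' : 51 * b ≤ T'.card := by
    rw [hT', Finset.card_erase_of_mem hi0T]; omega
  set Aset : Fin n → Set Ω := fun j =>
    {ω | h j ω = 1} ∩ ⋂ k ∈ T'.filter (fun k => k < j), {ω | h k ω = 0} with hAset
  have hAmeas : ∀ j, MeasurableSet (Aset j) := by
    intro j
    refine (hmeasH1 j).inter ?_
    refine MeasurableSet.biInter (Finset.countable_toSet _) (fun k _ => ?_)
    exact (hmeas_h k) (measurableSet_singleton 0)
  set R : Fin n → Ω → ℝ := fun j ω =>
    ∑ k ∈ (Finset.univ.erase i0).erase j, (h k ω * s k ω) * v k with hR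
  have hRmeas : ∀ j, Measurable (R j) := by
    intro j
    apply Finset.measurable_sum
    intro k _
    exact ((hmeas_h k).mul (hmeas_s k)).mul measurable_const
  -- key per-index estimate
  have hkey : ∀ j ∈ T', μ (Aset j) ≤ 2 * μ (X ∩ Aset j) := by
    intro j hj
    obtain ⟨hjne, hjTF⟩ := Finset.mem_erase.mp hj
    have htj : t ≤ |v j| := hi0min j hjTF
    have hjmem : j ∈ Finset.univ.erase i0 := Finset.mem_erase.mpr ⟨hjne, Finset.mem_univ j⟩
    set Dp : Set Ω := Aset j ∩ {ω | t ≤ |R j ω + v j|} with hDp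
    set Dm : Set Ω := Aset j ∩ {ω | t ≤ |R j ω - v j|} with hDm
    have hDpmeas : MeasurableSet Dp :=
      (hAmeas j).inter (measurableSet_le measurable_const ((hRmeas j).add_const _).abs)
    have hDmmeas : MeasurableSet Dm :=
      (hAmeas j).inter (measurableSet_le measurable_const ((hRmeas j).sub_const _).abs)
    -- c' decomposition on the relevant events
    have hcdec : ∀ ω, c' ω = (h j ω * s j ω) * v j + R j ω := by
      intro ω
      rw [hc', hR]
      exact (Finset.add_sum_erase _ _ hjmem).symm
    -- covering
    have hcoverD : Aset j ⊆ Dp ∪ Dm := by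
      intro ω hω
      by_cases hcase : t ≤ |R j ω + v j|
      · exact Or.inl ⟨hω, hcase⟩
      · refine Or.inr ⟨hω, ?_⟩
        have htri : |(R j ω + v j) - (R j ω - v j)| ≤ |R j ω + v j| + |R j ω - v j| :=
          abs_sub _ _
        have h2v : (R j ω + v j) - (R j ω - v j) = 2 * v j := by ring
        rw [h2v, abs_mul, abs_two] at htri
        simp only [Set.mem_setOf_eq]
        push_neg at hcase
        linarith
    -- inclusion into X
    have hsub1 : {ω | s j ω = 1} ∩ Dp ⊆ X ∩ Aset j := by
      rintro ω ⟨hs1, hA, hRv⟩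
      have hh1 : h j ω = 1 := hA.1
      have hs1' : s j ω = 1 := hs1
      refine ⟨?_, hA⟩
      rw [hX, Set.mem_setOf_eq, hcdec ω, hh1, hs1']
      simpa [add_comm] using hRv
    have hsub2 : {ω | s j ω = -1} ∩ Dm ⊆ X ∩ Aset j := by
      rintro ω ⟨hs1, hA, hRv⟩
      have hh1 : h j ω = 1 := hA.1
      have hs1' : s j ω = -1 := hs1
      refine ⟨?_, hA⟩
      rw [hX, Set.mem_setOf_eq, hcdec ω, hh1, hs1']
      have : 1 * (-1 : ℝ) * v j + R j ω = R j ω - v j := by ring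
      rw [this]
      exact hRv
    -- independence computations
    have hpeelD : ∀ (a : ℝ) (w : ℝ), μ ({ω | s j ω = a} ∩ (Aset j ∩ {ω | t ≤ |R j ω + w|}))
        = μ {ω | s j ω = a} * μ (Aset j ∩ {ω | t ≤ |R j ω + w|}) := by
      intro a w
      have hMmeas : MeasurableSet (({x : (Fin n ⊕ Fin n) → ℝ | x (Sum.inl j) = 1}
          ∩ ⋂ k ∈ T'.filter (fun k => k < j), {x : (Fin n ⊕ Fin n) → ℝ | x (Sum.inl k) = 0})
          ∩ {x : (Fin n ⊕ Fin n) → ℝ |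
              t ≤ |(∑ k ∈ (Finset.univ.erase i0).erase j, x (Sum.inl k) * x (Sum.inr k) * v k) + w|}) := by
        refine MeasurableSet.inter (MeasurableSet.inter ?_ ?_) ?_
        · exact (hpia (Sum.inl j)) (measurableSet_singleton (1:ℝ))
        · exact MeasurableSet.biInter (Finset.countable_toSet _)
            (fun k _ => (hpia (Sum.inl k)) (measurableSet_singleton (0:ℝ)))
        · have hmsum : Measurable (fun x : (Fin n ⊕ Fin n) → ℝ =>
              (∑ k ∈ (Finset.univ.erase i0).erase j, x (Sum.inl k) * x (Sum.inr k) * v k) + w) := by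
            apply Measurable.add_const
            apply Finset.measurable_sum
            intro k _
            exact ((hpia (Sum.inl k)).mul (hpia (Sum.inr k))).mul measurable_const
          exact measurableSet_le measurable_const hmsum.abs
      have key := peel (Sum.inr j) (measurableSet_singleton a) hMmeas
      have h1 : (F (Sum.inr j)) ⁻¹' {a} = {ω | s j ω = a} := by ext ω; simp [hF]
      have h2 : (fun ω => Function.update (fun k => F k ω) (Sum.inr j) 0) ⁻¹'
          (({x : (Fin n ⊕ Fin n) → ℝ | x (Sum.inl j) = 1}
          ∩ ⋂ k ∈ T'.filter (fun k => k < j), {x : (Fin n ⊕ Fin n) → ℝ | x (Sum.inl k) = 0})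
          ∩ {x : (Fin n ⊕ Fin n) → ℝ |
              t ≤ |(∑ k ∈ (Finset.univ.erase i0).erase j, x (Sum.inl k) * x (Sum.inr k) * v k) + w|})
          = Aset j ∩ {ω | t ≤ |R j ω + w|} := by
        ext ω
        simp only [Set.mem_preimage, Set.mem_inter_iff, Set.mem_setOf_eq, Set.mem_iInter,
          hAset, hR]
        rw [hsum_upd (Sum.inr j) _ ω (fun k hk =>
          ⟨Sum.inl_ne_inr, fun hc => (Finset.mem_erase.mp hk).1 (Sum.inr.inj hc)⟩)]
        simp [Function.update_apply, hF]
      rw [h1, h2] at key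
      exact key
    have he1 : μ ({ω | s j ω = 1} ∩ Dp) = 2⁻¹ * μ Dp := by
      rw [hDp, hpeelD 1 (v j), hprob_s j, one_div]
    have he2 : μ ({ω | s j ω = -1} ∩ Dm) = 2⁻¹ * μ Dm := by
      have hrw : Dm = Aset j ∩ {ω | t ≤ |R j ω + (- v j)|} := by
        rw [hDm]; rfl
      rw [hrw, hpeelD (-1) (-(v j)), hμs_neg j, one_div]
    -- combine
    have hdisj12 : Disjoint ({ω | s j ω = 1} ∩ Dp) ({ω | s j ω = -1} ∩ Dm) := by
      apply Set.disjoint_left.mpr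
      rintro ω ⟨h1', _⟩ ⟨h2', _⟩
      simp only [Set.mem_setOf_eq] at h1' h2'
      rw [h1'] at h2'; norm_num at h2'
    have hm2' : MeasurableSet ({ω | s j ω = -1} ∩ Dm) := (hmeasS j (-1)).inter hDmmeas
    have hge : 2⁻¹ * μ Dp + 2⁻¹ * μ Dm ≤ μ (X ∩ Aset j) := by
      rw [← he1, ← he2, ← measure_union hdisj12 hm2']
      exact measure_mono (Set.union_subset hsub1 hsub2)
    calc μ (Aset j) ≤ μ (Dp ∪ Dm) := measure_mono hcoverD
      _ ≤ μ Dp + μ Dm := measure_union_le _ _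
      _ = 2 * (2⁻¹ * μ Dp + 2⁻¹ * μ Dm) := by
          rw [mul_add, ← mul_assoc, ← mul_assoc, ENNReal.mul_inv_cancel (by norm_num) ENNReal.ofNat_ne_top, one_mul, one_mul]
      _ ≤ 2 * μ (X ∩ Aset j) := mul_le_mul_right hge 2
  -- pairwise disjointness
  have hdisjA : (↑T' : Set (Fin n)).PairwiseDisjoint (fun j => X ∩ Aset j) := by
    have key : ∀ a c : Fin n, a ∈ T' → c ∈ T' → a < c → Disjoint (X ∩ Aset a) (X ∩ Aset c) := by
      intro a c ha hc hac
      apply Set.disjoint_left.mpr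
      rintro ω ⟨_, hA1⟩ ⟨_, hA2⟩
      have h1 : h a ω = 1 := hA1.1
      have h0 : h a ω = 0 := by
        have h2 := hA2.2
        simp only [Set.mem_iInter] at h2
        exact h2 a (Finset.mem_filter.mpr ⟨ha, hac⟩)
      rw [h1] at h0; norm_num at h0
    intro j hj k hk hjk
    rcases lt_trichotomy j k with h'|h'|h'
    · exact key j k (Finset.mem_coe.mp hj) (Finset.mem_coe.mp hk) h'
    · exact absurd h' hjk
    · exact (key k j (Finset.mem_coe.mp hk) (Finset.mem_coe.mp hj) h').symm
  -- covering the union of actives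
  have hcover : (⋃ j ∈ T', {ω | h j ω = 1}) ⊆ ⋃ j ∈ T', Aset j := by
    intro ω hω
    simp only [Set.mem_iUnion] at hω ⊢
    obtain ⟨j, hj, hj1⟩ := hω
    have hne : (T'.filter (fun k => h k ω = 1)).Nonempty :=
      ⟨j, Finset.mem_filter.mpr ⟨hj, hj1⟩⟩
    obtain ⟨j0, hj0, hj0min⟩ := Finset.exists_min_image _ id hne
    obtain ⟨hj0T, hj01⟩ := Finset.mem_filter.mp hj0
    refine ⟨j0, hj0T, hj01, ?_⟩
    simp only [Set.mem_iInter]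
    intro k hk
    obtain ⟨hkT, hkj⟩ := Finset.mem_filter.mp hk
    rcases hval_h k ω with h'|h'
    · exact h'
    · exact absurd (hj0min k (Finset.mem_filter.mpr ⟨hkT, h'⟩)) (not_le.mpr hkj)
  have hchain : μ (⋃ j ∈ T', {ω | h j ω = 1}) ≤ 2 * μ X := by
    calc μ (⋃ j ∈ T', {ω | h j ω = 1}) ≤ μ (⋃ j ∈ T', Aset j) := measure_mono hcover
      _ ≤ ∑ j ∈ T', μ (Aset j) := measure_biUnion_finset_le _ _
      _ ≤ ∑ j ∈ T', 2 * μ (X ∩ Aset j) := Finset.sum_le_sum hkey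
      _ = 2 * ∑ j ∈ T', μ (X ∩ Aset j) := (Finset.mul_sum _ _ _).symm
      _ = 2 * μ (⋃ j ∈ T', X ∩ Aset j) := by
          rw [measure_biUnion_finset hdisjA (fun j _ => hXmeas.inter (hAmeas j))]
      _ ≤ 2 * μ X := mul_le_mul_right
          (measure_mono (Set.iUnion₂_subset fun j _ => Set.inter_subset_left)) 2
  -- Step C: probability of no active suspect key
  have hCC : μ (⋃ j ∈ T', {ω | h j ω = 1})
      = 1 - (1 - ((b:ℕ):ℝ≥0∞)⁻¹)^T'.card := by
    have hAc : (⋃ j ∈ T', {ω | h j ω = 1})ᶜ = ⋂ j ∈ T', {ω | h j ω = 0} := by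
      ext ω
      simp only [Set.mem_compl_iff, Set.mem_iUnion, Set.mem_iInter, not_exists,
        Set.mem_setOf_eq]
      constructor
      · intro hne j hj
        rcases hval_h j ω with h'|h'
        · exact h'
        · exact absurd h' (hne j hj)
      · intro hz j hj h1
        rw [hz j hj] at h1; norm_num at h1
    have hprod : μ (⋂ j ∈ T', {ω | h j ω = 0}) = (1 - ((b:ℕ):ℝ≥0∞)⁻¹)^T'.card := by
      have hmb := hindep.meas_biInter (S := T'.image Sum.inl)
        (s := fun k => Sum.elim (fun j => {ω | h j ω = 0}) (fun j => {ω | s j ω = 0}) k)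
        (by
          intro i hi
          obtain ⟨a, _, rfl⟩ := Finset.mem_image.mp hi
          exact ⟨{0}, measurableSet_singleton 0, rfl⟩)
      have hset : (⋂ i ∈ T'.image Sum.inl,
          Sum.elim (fun j => {ω | h j ω = 0}) (fun j => {ω | s j ω = 0}) i)
          = ⋂ j ∈ T', {ω | h j ω = 0} := by
        ext ω
        simp only [Set.mem_iInter, Finset.mem_image]
        constructor
        · intro H j hj
          exact H (Sum.inl j) ⟨j, hj, rfl⟩
        · rintro H i ⟨a, ha, rfl⟩
          exact H a ha
      have hprodim : (∏ i ∈ T'.image Sum.inl,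
          μ (Sum.elim (fun j => {ω | h j ω = 0}) (fun j => {ω | s j ω = 0}) i))
          = ∏ j ∈ T', μ {ω | h j ω = 0} := by
        rw [Finset.prod_image (fun a _ c _ hac => Sum.inl.inj hac)]
        simp only [Sum.elim_inl]
      have hμh0 : ∀ j, μ {ω | h j ω = 0} = 1 - ((b:ℕ):ℝ≥0∞)⁻¹ := by
        intro j
        have hcomp : {ω | h j ω = 0} = {ω | h j ω = 1}ᶜ := by
          ext ω
          rcases hval_h j ω with h'|h' <;> simp [h'] <;> norm_num
        rw [hcomp, prob_compl_eq_one_sub (hmeasH1 j), hprob_h j]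
      rw [hset, hprodim] at hmb
      rw [hmb]
      rw [Finset.prod_congr rfl (fun j _ => hμh0 j), Finset.prod_const]
    have hCCm : MeasurableSet (⋂ j ∈ T', {ω | h j ω = 0}) :=
      MeasurableSet.biInter (Finset.countable_toSet _)
        (fun j _ => (hmeas_h j) (measurableSet_singleton 0))
    have hAeq : (⋃ j ∈ T', {ω | h j ω = 1}) = (⋂ j ∈ T', {ω | h j ω = 0})ᶜ := by
      rw [← hAc, compl_compl]
    rw [hAeq, prob_compl_eq_one_sub hCCm, hprod]
  -- final numeric contradiction
  have hb1R : (1:ℝ) ≤ (b:ℝ) := by exact_mod_cast hb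
  have hbinv1 : ((b:ℕ):ℝ≥0∞)⁻¹ ≤ 1 := by
    rw [ENNReal.inv_le_one]
    exact_mod_cast hb
  have hq : ((1:ℝ≥0∞) - ((b:ℕ):ℝ≥0∞)⁻¹).toReal = 1 - ((b:ℝ))⁻¹ := by
    rw [ENNReal.toReal_sub_of_le hbinv1 ENNReal.one_ne_top]
    simp [ENNReal.toReal_inv]
  have hle1 : ((1:ℝ≥0∞) - ((b:ℕ):ℝ≥0∞)⁻¹)^T'.card ≤ 1 :=
    pow_le_one' tsub_le_self _
  have hμU : (μ (⋃ j ∈ T', {ω | h j ω = 1})).toReal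
      = 1 - (1 - ((b:ℝ))⁻¹)^T'.card := by
    rw [hCC, ENNReal.toReal_sub_of_le hle1 ENNReal.one_ne_top, ENNReal.toReal_pow, hq,
      ENNReal.toReal_one]
  have hr1 : 1 - (1 - ((b:ℝ))⁻¹)^T'.card ≤ 2 * (μ X).toReal := by
    rw [← hμU]
    have h2 : (2 * μ X).toReal = 2 * (μ X).toReal := by
      rw [ENNReal.toReal_mul]; norm_num
    rw [← h2]
    exact ENNReal.toReal_mono (ENNReal.mul_ne_top (by norm_num) (measure_ne_top μ X)) hchain
  have hexp : (1 - ((b:ℝ))⁻¹)^T'.card ≤ 14/15 := by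
    have h0 : (0:ℝ) ≤ 1 - (b:ℝ)⁻¹ := by
      have : (b:ℝ)⁻¹ ≤ 1 := inv_le_one_of_one_le₀ hb1R
      linarith
    have hle : 1 - (b:ℝ)⁻¹ ≤ Real.exp (-(b:ℝ)⁻¹) := by
      have := Real.add_one_le_exp (-(b:ℝ)⁻¹)
      linarith
    have hpow : (1 - (b:ℝ)⁻¹)^T'.card ≤ Real.exp (-(b:ℝ)⁻¹)^T'.card :=
      pow_le_pow_left₀ h0 hle _
    have her : Real.exp (-(b:ℝ)⁻¹)^T'.card = Real.exp (-((T'.card:ℝ) * (b:ℝ)⁻¹)) := by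
      rw [← Real.exp_nat_mul]
      ring_nf
    have hbpos : (0:ℝ) < b := by exact_mod_cast hb
    have hm : (51:ℝ) * b ≤ T'.card := by exact_mod_cast hmT'
    have hbig : (1:ℝ) ≤ (T'.card:ℝ) * (b:ℝ)⁻¹ := by
      have hstep : (51:ℝ) * (b:ℝ) * ((b:ℝ))⁻¹ ≤ (T'.card:ℝ) * ((b:ℝ))⁻¹ :=
        mul_le_mul_of_nonneg_right hm (by positivity)
      have hcancel : (51:ℝ) * (b:ℝ) * ((b:ℝ))⁻¹ = 51 := by field_simp
      linarith
    have hmono : Real.exp (-((T'.card:ℝ) * (b:ℝ)⁻¹)) ≤ Real.exp (-1) :=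
      Real.exp_le_exp.mpr (by linarith)
    have h3 : (2:ℝ) ≤ Real.exp 1 := by
      have := Real.add_one_le_exp (1:ℝ); linarith
    have hfin : Real.exp (-1:ℝ) ≤ 14/15 := by
      rw [Real.exp_neg]
      have hinv : (Real.exp 1)⁻¹ ≤ 2⁻¹ := by
        apply inv_anti₀ (by norm_num) h3
      linarith
    calc (1 - ((b:ℝ))⁻¹)^T'.card ≤ Real.exp (-(b:ℝ)⁻¹)^T'.card := hpow
      _ = Real.exp (-((T'.card:ℝ) * (b:ℝ)⁻¹)) := her
      _ ≤ Real.exp (-1) := hmono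
      _ ≤ 14/15 := hfin
  linarith
end

section
/- Sandwich property of the noisy quantile estimate: let (x_t)_{t ∈ T} be a finite family of integers, let v be a real, err ≥ 0 a real, and T₀, Γ ≥ 0 reals. Call index t good if |x_t − v| ≤ err and bad otherwise; let n_good and n_bad be the numbers of good and bad indices. Suppose an integer ṽ satisfies: (a) #{t : x_t ≤ ṽ} ≥ T₀ − Γ; (b) #{t : x_t ≤ ṽ − 1} ≤ T₀ + Γ; and that n_good > T₀ + Γ and n_bad < T₀ − Γ. Then |ṽ − v| ≤ err. -/
/-- Sandwich property of the noisy quantile estimate (Lemma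
`lemma:good-estimation`, combinatorial form): if the returned integer `ṽ`
satisfies the noisy count conditions (a), (b), and the numbers of good/bad
indices satisfy `n_good > T₀ + Γ` and `n_bad < T₀ − Γ`, then `|ṽ − v| ≤ err`. -/
theorem noisy_quantile_sandwich
    {T : Type*} [Fintype T]
    (x : T → ℤ) (v err : ℝ) (herr : 0 ≤ err)
    (T0 Γ : ℝ) (hT0 : 0 ≤ T0) (hΓ : 0 ≤ Γ)
    (vtil : ℤ)
    (ha : T0 - Γ ≤ ((Finset.univ.filter fun t => x t ≤ vtil).card : ℝ))
    (hb : ((Finset.univ.filter fun t => x t ≤ vtil - 1).card : ℝ) ≤ T0 + Γ)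
    (hgood : T0 + Γ < ((Finset.univ.filter fun t => |(x t : ℝ) - v| ≤ err).card : ℝ))
    (hbad : ((Finset.univ.filter fun t => ¬ |(x t : ℝ) - v| ≤ err).card : ℝ) < T0 - Γ) :
    |(vtil : ℝ) - v| ≤ err := by
  rw [abs_le]
  constructor
  · by_contra h
    push_neg at h
    have hsub : (Finset.univ.filter fun t => x t ≤ vtil) ⊆
        (Finset.univ.filter fun t => ¬ |(x t : ℝ) - v| ≤ err) := by
      intro t ht
      simp only [Finset.mem_filter, Finset.mem_univ, true_and] at ht ⊢
      intro habs
      have h0 : (x t : ℝ) ≤ vtil := by exact_mod_cast ht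
      have := abs_le.mp habs
      linarith
    have hc := Finset.card_le_card hsub
    have hc' : ((Finset.univ.filter fun t => x t ≤ vtil).card : ℝ) ≤
        ((Finset.univ.filter fun t => ¬ |(x t : ℝ) - v| ≤ err).card : ℝ) :=
      Nat.cast_le.mpr hc
    linarith
  · by_contra h
    push_neg at h
    have hsub : (Finset.univ.filter fun t => |(x t : ℝ) - v| ≤ err) ⊆
        (Finset.univ.filter fun t => x t ≤ vtil - 1) := by
      intro t ht
      simp only [Finset.mem_filter, Finset.mem_univ, true_and] at ht ⊢
      have h0 := abs_le.mp ht
      have h1 : (x t : ℝ) < vtil := by linarith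
      have h2 : x t < vtil := by exact_mod_cast h1
      omega
    have hc := Finset.card_le_card hsub
    have hc' : ((Finset.univ.filter fun t => |(x t : ℝ) - v| ≤ err).card : ℝ) ≤
        ((Finset.univ.filter fun t => x t ≤ vtil - 1).card : ℝ) :=
      Nat.cast_le.mpr hc
    linarith
end
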